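/- arXiv:2506.13626 — 8 statements merged into one kernel-verified Lean document; each statement's English description precedes it below -/
import Mathlib

section
/- For every ρ ∈ (0,1), consider the following concrete instance of the joint forwarding and computation offloading problem: nodes V = {1,2,3,4}; bidirectional links E = {(1,2),(2,3),(3,4),(1,4),(2,4)} (together with their reverses); a single task (d,m) = (4,1) with packet sizes L⁻_1 = L⁺_1 = 1 and weights w_{i1} = 1; input rates r_1 = 1 and r_i = 0 for i ≠ 1; linear link costs D_{14}(F) = D_{41}(F) = F, D_{24}(F) = D_{42}(F) = F, and D_{12}(F) = D_{21}(F) = D_{23}(F) = D_{32}(F) = D_{34}(F) = D_{43}(F) = (ρ/3)·F; computation costs C_4 ≡ 0 and C_i(G) = 2G for i ∈ {1,2,3}. Let φ be the feasible strategy with φ⁻_{14} = 1, φ⁻_{24} = 1, φ⁻_{34} = 1, φ⁻_{40} = 1, and result variables φ⁺_{14} = φ⁺_{24} = φ⁺_{34} = 1, φ⁺_{4j} = 0; let φ* be the feasible strategy with φ⁻*_{12} = 1, φ⁻*_{23} = 1, φ⁻*_{34} = 1, φ⁻*_{40} = 1 and the same result variables. Then: (i) φ satisfies the first-order KKT conditions,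 i.e., for every i, every task, and every j ∈ {0} ∪ N_i with φ⁻_{ij} > 0 one has t⁻_i·δ⁻_{ij} = min_{k∈{0}∪N_i} t⁻_i·δ⁻_{ik}, and similarly for the result variables with t⁺_i·δ⁺; (ii) T(φ) = 1; (iii) T(φ*) = ρ and φ* is a global optimum of the problem (no flow-feasible competitor has total cost less than ρ). Hence T(φ*)/T(φ) = ρ, so KKT points can be arbitrarily suboptimal. -/
open Finset

namespace Stmt1

/-- Links of the example network. Nodes `0,1,2,3 : Fin 4` stand for the paper's nodes
`1,2,3,4`; the single task is `(d,m) = (4,1)`, i.e. destination `3`, with unit packet sizes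
`L⁻ = L⁺ = 1` and unit computation weight. -/
def Edges : Finset (Fin 4 × Fin 4) :=
  {(0, 1), (1, 0), (1, 2), (2, 1), (2, 3), (3, 2), (0, 3), (3, 0), (1, 3), (3, 1)}

/-- Marginal (linear) transmission cost of each link: `1` on links `1↔4`, `2↔4`,
and `ρ/3` on the remaining links. -/
noncomputable def dcoef (ρ : ℝ) (i j : Fin 4) : ℝ :=
  if (i, j) = ((0 : Fin 4), (3 : Fin 4)) ∨ (i, j) = ((3 : Fin 4), (0 : Fin 4)) ∨
     (i, j) = ((1 : Fin 4), (3 : Fin 4)) ∨ (i, j) = ((3 : Fin 4), (1 : Fin 4))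
  then 1 else ρ / 3

/-- Linear link cost `D_{ij}(F) = d_{ij}·F`. -/
noncomputable def Dlink (ρ : ℝ) (i j : Fin 4) (x : ℝ) : ℝ := dcoef ρ i j * x

/-- Derivative of the linear link cost. -/
noncomputable def Dlink' (ρ : ℝ) (i j : Fin 4) (_ : ℝ) : ℝ := dcoef ρ i j

/-- Computation cost: `C_4 ≡ 0` at the server (node `3`), `C_i(G) = 2·G` elsewhere. -/
def Ccomp (i : Fin 4) (x : ℝ) : ℝ := if i = 3 then 0 else 2 * x

/-- Derivative of the computation cost. -/
def Ccomp' (i : Fin 4) (_ : ℝ) : ℝ := if i = 3 then 0 else 2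

/-- Exogenous input rates: `r_1 = 1` (node `0`), zero elsewhere. -/
def rate (i : Fin 4) : ℝ := if i = 0 then 1 else 0

/-- The KKT strategy `φ`: every node forwards its data directly to node `4` (node `3`),
which computes locally (`φ⁻₄₀ = 1`). -/
def phim : Fin 4 → Option (Fin 4) → ℝ := fun i j =>
  if i = 3 then (if j = none then 1 else 0) else (if j = some 3 then 1 else 0)

/-- Result forwarding of `φ`: `φ⁺₁₄ = φ⁺₂₄ = φ⁺₃₄ = 1`, `φ⁺₄ⱼ = 0`. -/
def phip : Fin 4 → Fin 4 → ℝ := fun i j => if i ≠ 3 ∧ j = 3 then 1 else 0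

/-- The optimal strategy `φ*`: data routed along the path `1 → 2 → 3 → 4`,
computation at node `4`. -/
def phimStar : Fin 4 → Option (Fin 4) → ℝ := fun i j =>
  if i = 0 then (if j = some 1 then 1 else 0)
  else if i = 1 then (if j = some 2 then 1 else 0)
  else if i = 2 then (if j = some 3 then 1 else 0)
  else (if j = none then 1 else 0)

/-- Result forwarding of `φ*` (same as for `φ`). -/
def phipStar : Fin 4 → Fin 4 → ℝ := phip

/-- Neighbors of node `i`. -/
def Nb (i : Fin 4) : Finset (Fin 4) := univ.filter (fun j => (i, j) ∈ Edges)

lemma sumEdges (f : Fin 4 × Fin 4 → ℝ) : ∑ e ∈ Edges, f e =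
    f (0,1) + f (1,0) + f (1,2) + f (2,1) + f (2,3) + f (3,2)
    + f (0,3) + f (3,0) + f (1,3) + f (3,1) := by
  simp [Edges, Finset.sum_insert, Finset.mem_insert]; ring

lemma nb0 (f : Fin 4 → ℝ) : ∑ j ∈ Nb 0, f j = f 1 + f 3 := by
  simp [Nb, Finset.sum_filter, Fin.sum_univ_four, Edges]
lemma nb1 (f : Fin 4 → ℝ) : ∑ j ∈ Nb 1, f j = f 0 + f 2 + f 3 := by
  simp [Nb, Finset.sum_filter, Fin.sum_univ_four, Edges]
lemma nb2 (f : Fin 4 → ℝ) : ∑ j ∈ Nb 2, f j = f 1 + f 3 := by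
  simp [Nb, Finset.sum_filter, Fin.sum_univ_four, Edges]
lemma nb3 (f : Fin 4 → ℝ) : ∑ j ∈ Nb 3, f j = f 0 + f 1 + f 2 := by
  simp [Nb, Finset.sum_filter, Fin.sum_univ_four, Edges]

lemma mem0 : insert (none : Option (Fin 4)) ((Nb 0).image some) = {none, some 1, some 3} := by decide
lemma mem1 : insert (none : Option (Fin 4)) ((Nb 1).image some) = {none, some 0, some 2, some 3} := by decide
lemma mem2 : insert (none : Option (Fin 4)) ((Nb 2).image some) = {none, some 1, some 3} := by decide
lemma mem3 : insert (none : Option (Fin 4)) ((Nb 3).image some) = {none, some 0, some 1, some 2} := by decide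



/-- Proposition 1 instance: in the concrete four-node network, the strategy `φ` satisfies the
first-order KKT conditions with total cost `1`, while the strategy `φ*` has total cost `ρ` and
is a global optimum; hence `T(φ*)/T(φ) = ρ`, so KKT points can be arbitrarily suboptimal. -/
theorem stmt_1 (ρ : ℝ) (hρ : ρ ∈ Set.Ioo (0 : ℝ) 1)
    -- traffic, flows and marginals of the KKT strategy φ
    (tm tp : Fin 4 → ℝ) (htm0 : ∀ i, 0 ≤ tm i) (htp0 : ∀ i, 0 ≤ tp i)
    (g : Fin 4 → ℝ) (hg : ∀ i, g i = tm i * phim i none)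
    (htm : ∀ i, tm i = rate i + ∑ j, tm j * phim j (some i))
    (htp : ∀ i, tp i = g i + ∑ j, tp j * phip j i)
    (F : Fin 4 → Fin 4 → ℝ)
    (hF : ∀ i j, F i j = tm i * phim i (some j) + tp i * phip i j)
    (G : Fin 4 → ℝ) (hG : ∀ i, G i = g i)
    (sgm rhm : Fin 4 → ℝ)
    (hsgm3 : sgm 3 = 0)
    (hsgm : ∀ i, i ≠ 3 → sgm i = ∑ j ∈ Nb i, phip i j * (Dlink' ρ i j (F i j) + sgm j))
    (hrhm : ∀ i, rhm i = (∑ j ∈ Nb i, phim i (some j) * (Dlink' ρ i j (F i j) + rhm j))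
        + phim i none * (Ccomp' i (G i) + sgm i))
    (δm : Fin 4 → Option (Fin 4) → ℝ) (δp : Fin 4 → Fin 4 → ℝ)
    (hδms : ∀ i j, δm i (some j) = Dlink' ρ i j (F i j) + rhm j)
    (hδmn : ∀ i, δm i none = Ccomp' i (G i) + sgm i)
    (hδp : ∀ i j, δp i j = Dlink' ρ i j (F i j) + sgm j)
    -- traffic and flows of the optimal strategy φ*
    (tmS tpS : Fin 4 → ℝ) (htmS0 : ∀ i, 0 ≤ tmS i) (htpS0 : ∀ i, 0 ≤ tpS i)
    (gS : Fin 4 → ℝ) (hgS : ∀ i, gS i = tmS i * phimStar i none)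
    (htmS : ∀ i, tmS i = rate i + ∑ j, tmS j * phimStar j (some i))
    (htpS : ∀ i, tpS i = gS i + ∑ j, tpS j * phipStar j i)
    (FS : Fin 4 → Fin 4 → ℝ)
    (hFS : ∀ i j, FS i j = tmS i * phimStar i (some j) + tpS i * phipStar i j)
    (GS : Fin 4 → ℝ) (hGS : ∀ i, GS i = gS i) :
    -- (i) φ satisfies the first-order KKT conditions of Lemma 1
    ((∀ i : Fin 4, ∀ j ∈ insert (none : Option (Fin 4)) ((Nb i).image some),
        0 < phim i j → ∀ k ∈ insert (none : Option (Fin 4)) ((Nb i).image some),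
          tm i * δm i j ≤ tm i * δm i k) ∧
      (∀ i : Fin 4, i ≠ 3 → ∀ j ∈ Nb i, 0 < phip i j →
        ∀ k ∈ Nb i, tp i * δp i j ≤ tp i * δp i k)) ∧
    -- (ii) T(φ) = 1
    ((∑ e ∈ Edges, Dlink ρ e.1 e.2 (F e.1 e.2)) + (∑ i, Ccomp i (G i)) = 1) ∧
    -- (iii) T(φ*) = ρ and φ* is a global optimum
    (((∑ e ∈ Edges, Dlink ρ e.1 e.2 (FS e.1 e.2)) + (∑ i, Ccomp i (GS i)) = ρ) ∧
      (∀ (fm' fp' : Fin 4 → Fin 4 → ℝ) (g' : Fin 4 → ℝ),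
        (∀ i j, 0 ≤ fm' i j) → (∀ i j, 0 ≤ fp' i j) → (∀ i, 0 ≤ g' i) →
        (∀ i j, (i, j) ∉ Edges → fm' i j = 0) →
        (∀ i j, (i, j) ∉ Edges → fp' i j = 0) →
        (∀ i : Fin 4, (∑ j ∈ Nb i, fm' i j) + g' i = (∑ j ∈ Nb i, fm' j i) + rate i) →
        (∀ i : Fin 4, i ≠ 3 → (∑ j ∈ Nb i, fp' i j) = (∑ j ∈ Nb i, fp' j i) + g' i) →
        (∀ j, fp' 3 j = 0) →
        ρ ≤ (∑ e ∈ Edges, Dlink ρ e.1 e.2 (fm' e.1 e.2 + fp' e.1 e.2))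
            + ∑ i, Ccomp i (g' i))) ∧
    -- hence T(φ*)/T(φ) = ρ
    ((∑ e ∈ Edges, Dlink ρ e.1 e.2 (FS e.1 e.2)) + (∑ i, Ccomp i (GS i)))
      / ((∑ e ∈ Edges, Dlink ρ e.1 e.2 (F e.1 e.2)) + (∑ i, Ccomp i (G i))) = ρ := by
  obtain ⟨hρ0, hρ1⟩ := hρ
  -- values of the KKT strategy
  have tm0 : tm 0 = 1 := by have := htm 0; simpa [phim, rate, Fin.sum_univ_four] using this
  have tm1 : tm 1 = 0 := by have := htm 1; simpa [phim, rate, Fin.sum_univ_four] using this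
  have tm2 : tm 2 = 0 := by have := htm 2; simpa [phim, rate, Fin.sum_univ_four] using this
  have tm3 : tm 3 = 1 := by
    have := htm 3; simp [phim, rate, Fin.sum_univ_four, tm0, tm1, tm2] at this; linarith
  have g0 : g 0 = 0 := by simp [hg, phim]
  have g1 : g 1 = 0 := by simp [hg, phim]
  have g2 : g 2 = 0 := by simp [hg, phim]
  have g3 : g 3 = 1 := by simp [hg, phim, tm3]
  have tp0 : tp 0 = 0 := by have := htp 0; simpa [phip, g0, Fin.sum_univ_four] using this
  have tp1 : tp 1 = 0 := by have := htp 1; simpa [phip, g1, Fin.sum_univ_four] using this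
  have tp2 : tp 2 = 0 := by have := htp 2; simpa [phip, g2, Fin.sum_univ_four] using this
  -- marginals
  have s0 : sgm 0 = 1 := by
    have := hsgm 0 (by decide); rw [nb0] at this
    simpa [phip, Dlink', dcoef, hsgm3] using this
  have s1 : sgm 1 = 1 := by
    have := hsgm 1 (by decide); rw [nb1] at this
    simpa [phip, Dlink', dcoef, hsgm3] using this
  have s2 : sgm 2 = ρ / 3 := by
    have := hsgm 2 (by decide); rw [nb2] at this
    simpa [phip, Dlink', dcoef, hsgm3] using this
  have r3 : rhm 3 = 0 := by
    have := hrhm 3; rw [nb3] at this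
    simpa [phim, Dlink', dcoef, Ccomp', hsgm3] using this
  have r0 : rhm 0 = 1 := by
    have := hrhm 0; rw [nb0] at this
    simpa [phim, Dlink', dcoef, Ccomp', r3] using this
  have r1 : rhm 1 = 1 := by
    have := hrhm 1; rw [nb1] at this
    simpa [phim, Dlink', dcoef, Ccomp', r3] using this
  have r2 : rhm 2 = ρ / 3 := by
    have := hrhm 2; rw [nb2] at this
    simpa [phim, Dlink', dcoef, Ccomp', r3] using this
  -- (ii) total cost of φ
  have costφ : (∑ e ∈ Edges, Dlink ρ e.1 e.2 (F e.1 e.2)) + (∑ i, Ccomp i (G i)) = 1 := by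
    rw [sumEdges, Fin.sum_univ_four]
    simp only [hF, hG]
    simp [Dlink, dcoef, Ccomp, phim, phip, tm0, tm1, tm2, tm3, tp0, tp1, tp2, g0, g1, g2, g3]
  -- values of the optimal strategy
  have tmS0 : tmS 0 = 1 := by have := htmS 0; simpa [phimStar, rate, Fin.sum_univ_four] using this
  have tmS1 : tmS 1 = 1 := by
    have := htmS 1; simp [phimStar, rate, Fin.sum_univ_four, tmS0] at this; linarith
  have tmS2 : tmS 2 = 1 := by
    have := htmS 2; simp [phimStar, rate, Fin.sum_univ_four, tmS1] at this; linarith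
  have gS0 : gS 0 = 0 := by simp [hgS, phimStar]
  have gS1 : gS 1 = 0 := by simp [hgS, phimStar]
  have gS2 : gS 2 = 0 := by simp [hgS, phimStar]
  have gS3 : gS 3 = tmS 3 := by simp [hgS, phimStar]
  have tmS3 : tmS 3 = 1 := by
    have := htmS 3; simp [phimStar, rate, Fin.sum_univ_four, tmS0, tmS1, tmS2] at this; linarith
  have tpS0 : tpS 0 = 0 := by
    have := htpS 0; simpa [phipStar, phip, gS0, Fin.sum_univ_four] using this
  have tpS1 : tpS 1 = 0 := by
    have := htpS 1; simpa [phipStar, phip, gS1, Fin.sum_univ_four] using this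
  have tpS2 : tpS 2 = 0 := by
    have := htpS 2; simpa [phipStar, phip, gS2, Fin.sum_univ_four] using this
  have costS : (∑ e ∈ Edges, Dlink ρ e.1 e.2 (FS e.1 e.2)) + (∑ i, Ccomp i (GS i)) = ρ := by
    rw [sumEdges, Fin.sum_univ_four]
    simp only [hFS, hGS]
    simp [Dlink, dcoef, Ccomp, phimStar, phipStar, phip, tmS0, tmS1, tmS2, tmS3,
      tpS0, tpS1, tpS2, gS0, gS1, gS2]
    ring
  refine ⟨⟨?_, ?_⟩, costφ, ⟨costS, ?_⟩, by rw [costφ, costS]; simp⟩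
  · -- KKT conditions for data
    intro i j hj hpos k hk
    have hi4 : i = 0 ∨ i = 1 ∨ i = 2 ∨ i = 3 := by omega
    rcases hi4 with rfl | rfl | rfl | rfl
    · rw [mem0] at hj hk
      simp only [Finset.mem_insert, Finset.mem_singleton] at hj hk
      rcases hj with rfl | rfl | rfl
      · simp [phim] at hpos
      · simp [phim] at hpos
      · rcases hk with rfl | rfl | rfl <;>
          simp [tm0, hδms, hδmn, Dlink', dcoef, Ccomp', r0, r1, r3, s0, hG, g0] <;> linarith
    · rw [mem1] at hj hk
      simp only [Finset.mem_insert, Finset.mem_singleton] at hj hk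
      simp [tm1]
    · rw [mem2] at hj hk
      simp only [Finset.mem_insert, Finset.mem_singleton] at hj hk
      simp [tm2]
    · rw [mem3] at hj hk
      simp only [Finset.mem_insert, Finset.mem_singleton] at hj hk
      rcases hj with rfl | rfl | rfl | rfl
      · rcases hk with rfl | rfl | rfl | rfl <;>
          simp [tm3, hδms, hδmn, Dlink', dcoef, Ccomp', r0, r1, r2, hsgm3, hG, g3] <;> linarith
      · simp [phim] at hpos
      · simp [phim] at hpos
      · simp [phim] at hpos
  · -- KKT conditions for results
    intro i hi j hj hpos k hk
    have hi4 : i = 0 ∨ i = 1 ∨ i = 2 ∨ i = 3 := by omega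
    rcases hi4 with rfl | rfl | rfl | rfl
    · simp [tp0]
    · simp [tp1]
    · simp [tp2]
    · exact absurd rfl hi
  · -- global optimality
    intro fm' fp' g' hfm0 hfp0 hg0 hfmE hfpE hcons hconsP hfp3
    have c0 := hcons 0
    have c1 := hcons 1
    have c2 := hcons 2
    simp [Nb, Finset.sum_filter, Fin.sum_univ_four, Edges, rate] at c0 c1 c2
    have c0ρ : ρ * (fm' 0 1 + fm' 0 3 + g' 0) = ρ * (fm' 1 0 + fm' 3 0 + 1) := by
      linear_combination ρ * c0
    have c1ρ : ρ * (fm' 1 0 + fm' 1 2 + fm' 1 3 + g' 1) = ρ * (fm' 0 1 + fm' 2 1 + fm' 3 1) := by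
      linear_combination ρ * c1
    have c2ρ : ρ * (fm' 2 1 + fm' 2 3 + g' 2) = ρ * (fm' 1 2 + fm' 3 2) := by
      linear_combination ρ * c2
    rw [sumEdges, Fin.sum_univ_four]
    simp [Dlink, dcoef, Ccomp]
    have B : ∀ x : ℝ, 0 ≤ x → ρ * x ≤ x := fun x hx => mul_le_of_le_one_left hx hρ1.le
    linarith [c0ρ, c1ρ, c2ρ,
      mul_nonneg hρ0.le (hfm0 1 0), mul_nonneg hρ0.le (hfm0 2 1), mul_nonneg hρ0.le (hfm0 3 2),
      mul_nonneg hρ0.le (hfm0 3 0), mul_nonneg hρ0.le (hfm0 3 1),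
      mul_nonneg hρ0.le (hfp0 0 1), mul_nonneg hρ0.le (hfp0 1 0), mul_nonneg hρ0.le (hfp0 1 2),
      mul_nonneg hρ0.le (hfp0 2 1), mul_nonneg hρ0.le (hfp0 2 3), mul_nonneg hρ0.le (hfp0 3 2),
      B (fm' 0 3) (hfm0 0 3), B (fm' 1 3) (hfm0 1 3),
      B (g' 0) (hg0 0), B (g' 1) (hg0 1), B (g' 2) (hg0 2),
      hfm0 0 1, hfm0 1 0, hfm0 1 2, hfm0 2 1, hfm0 2 3, hfm0 3 2,
      hfm0 0 3, hfm0 3 0, hfm0 1 3, hfm0 3 1,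
      hfp0 0 3, hfp0 3 0, hfp0 1 3, hfp0 3 1,
      hg0 0, hg0 1, hg0 2]


end Stmt1
end

section
/- Suppose φ is a feasible forwarding strategy, t⁻, t⁺ are nonnegative traffic vectors solving the traffic equations, ρ, σ are marginal vectors solving the marginal recursions, and the sufficiency condition (8) holds at φ. Then φ is a global optimum of the joint forwarding and computation offloading problem: for every flow-feasible competitor (f⁻*, f⁺*, g*) with link flows F* and workloads G*, one has Σ_{(i,j)∈E} D_{ij}(F_{ij}) + Σ_{i∈V} C_i(G_i) ≤ Σ_{(i,j)∈E} D_{ij}(F*_{ij}) + Σ_{i∈V} C_i(G*_i). -/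
open Finset

lemma cvx_grad {f : ℝ → ℝ} {f' x : ℝ} (hconv : ConvexOn ℝ Set.univ f)
    (hder : HasDerivAt f f' x) (y : ℝ) : f x + f' * (y - x) ≤ f y := by
  rcases lt_trichotomy x y with h | h | h
  · have := hconv.le_slope_of_hasDerivAt (Set.mem_univ x) (Set.mem_univ y) h hder
    rw [slope_def_field] at this
    have hxy : 0 < y - x := by linarith
    have h2 : f' * (y - x) ≤ f y - f x := (le_div_iff₀ hxy).mp this
    linarith
  · simp [h]
  · have := hconv.slope_le_of_hasDerivAt (Set.mem_univ y) (Set.mem_univ x) h hder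
    rw [slope_def_field] at this
    have hxy : 0 < x - y := by linarith
    have h2 : f x - f y ≤ f' * (x - y) := by
      have := (div_le_iff₀ hxy).mp this
      linarith
    linarith [h2]

lemma comb_le {ι : Type*} (s : Finset ι) (a v : ι → ℝ) (ha : ∀ j ∈ s, 0 ≤ a j)
    (hs : ∑ j ∈ s, a j = 1)
    (hmin : ∀ j ∈ s, 0 < a j → ∀ k ∈ s, v j ≤ v k)
    {k : ι} (hk : k ∈ s) : ∑ j ∈ s, a j * v j ≤ v k := by
  have h1 : ∑ j ∈ s, a j * v j ≤ ∑ j ∈ s, a j * v k := by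
    refine Finset.sum_le_sum fun j hj => ?_
    rcases (ha j hj).eq_or_lt with h0 | h0
    · simp [← h0]
    · exact mul_le_mul_of_nonneg_left (hmin j hj h0 k hk) h0.le
  calc ∑ j ∈ s, a j * v j ≤ ∑ j ∈ s, a j * v k := h1
    _ = (∑ j ∈ s, a j) * v k := by rw [Finset.sum_mul]
    _ = v k := by rw [hs, one_mul]

lemma comb_ge {ι : Type*} (s : Finset ι) (a v : ι → ℝ) (ha : ∀ j ∈ s, 0 ≤ a j)
    (hs : ∑ j ∈ s, a j = 1) {j : ι} (hj : j ∈ s)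
    (hminj : ∀ k ∈ s, v j ≤ v k) : v j ≤ ∑ k ∈ s, a k * v k := by
  have h1 : ∑ k ∈ s, a k * v j ≤ ∑ k ∈ s, a k * v k :=
    Finset.sum_le_sum fun k hk => mul_le_mul_of_nonneg_left (hminj k hk) (ha k hk)
  calc v j = (∑ k ∈ s, a k) * v j := by rw [hs, one_mul]
    _ = ∑ k ∈ s, a k * v j := by rw [Finset.sum_mul]
    _ ≤ ∑ k ∈ s, a k * v k := h1

lemma sum_over_E {V : Type*} [Fintype V] [DecidableEq V] (E : Finset (V × V)) (h : V → V → ℝ) :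
    ∑ e ∈ E, h e.1 e.2 = ∑ i, ∑ j ∈ univ.filter (fun j => (i, j) ∈ E), h i j := by
  symm
  calc ∑ i, ∑ j ∈ univ.filter (fun j => (i, j) ∈ E), h i j
      = ∑ i, ∑ j, if (i, j) ∈ E then h i j else 0 := by
        simp [Finset.sum_filter]
    _ = ∑ p ∈ univ ×ˢ univ, if p ∈ E then h p.1 p.2 else 0 := by
        rw [Finset.sum_product]
    _ = ∑ p ∈ (univ ×ˢ univ) ∩ E, h p.1 p.2 := Finset.sum_ite_mem _ _ _
    _ = ∑ p ∈ E, h p.1 p.2 := by rw [Finset.univ_product_univ, Finset.univ_inter]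

lemma sum_swap_E {V : Type*} [DecidableEq V] (E : Finset (V × V))
    (hEsymm : ∀ i j : V, (i, j) ∈ E → (j, i) ∈ E) (h : V → V → ℝ) :
    ∑ e ∈ E, h e.1 e.2 = ∑ e ∈ E, h e.2 e.1 := by
  refine Finset.sum_nbij' Prod.swap Prod.swap ?_ ?_ ?_ ?_ ?_ <;>
    simp_all [Prod.swap]

lemma telescope {V : Type*} [Fintype V] [DecidableEq V] (E : Finset (V × V))
    (hEsymm : ∀ i j : V, (i, j) ∈ E → (j, i) ∈ E)
    (fl c : V → V → ℝ) (val : V → ℝ) :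
    ∑ e ∈ E, (c e.1 e.2 + val e.2 - val e.1) * fl e.1 e.2
      = (∑ e ∈ E, c e.1 e.2 * fl e.1 e.2)
        - ∑ i, val i * ((∑ j ∈ univ.filter (fun j => (i, j) ∈ E), fl i j)
            - ∑ j ∈ univ.filter (fun j => (i, j) ∈ E), fl j i) := by
  have h1 : ∑ e ∈ E, val e.1 * fl e.1 e.2
      = ∑ i, val i * ∑ j ∈ univ.filter (fun j => (i, j) ∈ E), fl i j := by
    rw [sum_over_E E (fun i j => val i * fl i j)]
    simp [Finset.mul_sum]
  have h2 : ∑ e ∈ E, val e.2 * fl e.1 e.2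
      = ∑ i, val i * ∑ j ∈ univ.filter (fun j => (i, j) ∈ E), fl j i := by
    rw [sum_swap_E E hEsymm (fun i j => val j * fl i j)]
    rw [sum_over_E E (fun i j => val i * fl j i)]
    simp [Finset.mul_sum]
  have h3 : ∑ e ∈ E, (c e.1 e.2 + val e.2 - val e.1) * fl e.1 e.2
      = (∑ e ∈ E, c e.1 e.2 * fl e.1 e.2) + (∑ e ∈ E, val e.2 * fl e.1 e.2)
        - ∑ e ∈ E, val e.1 * fl e.1 e.2 := by
    rw [← Finset.sum_add_distrib, ← Finset.sum_sub_distrib]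
    exact Finset.sum_congr rfl fun e _ => by ring
  rw [h3, h1, h2]
  have h4 : ∑ i : V, val i * ((∑ j ∈ univ.filter (fun j => (i, j) ∈ E), fl i j)
      - ∑ j ∈ univ.filter (fun j => (i, j) ∈ E), fl j i)
      = (∑ i : V, val i * ∑ j ∈ univ.filter (fun j => (i, j) ∈ E), fl i j)
        - ∑ i : V, val i * ∑ j ∈ univ.filter (fun j => (i, j) ∈ E), fl j i := by
    rw [← Finset.sum_sub_distrib]
    exact Finset.sum_congr rfl fun i _ => by ring
  rw [h4]; ring

/-- Theorem 1 (sufficiency): if a feasible forwarding strategy `φ`, with traffic vectors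
`t⁻, t⁺` solving the traffic equations and marginal vectors `ρ, σ` solving the marginal
recursions, satisfies the sufficiency condition (8), then `φ` is a global optimum of the joint
forwarding and computation offloading problem: its total cost is no larger than that of any
flow-feasible competitor. -/
theorem stmt_2
    {V M : Type*} [Fintype V] [DecidableEq V] [Fintype M] [DecidableEq M]
    -- network
    (E : Finset (V × V))
    (hEsymm : ∀ i j : V, (i, j) ∈ E → (j, i) ∈ E)
    (hEirrefl : ∀ i : V, (i, i) ∉ E)
    (Tsk : Finset (V × M))
    (Lm Lp : M → ℝ) (hLm : ∀ m, 0 < Lm m) (hLp : ∀ m, 0 < Lp m)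
    (w : V → M → ℝ) (hw : ∀ i m, 0 < w i m)
    (r : V → V × M → ℝ) (hr : ∀ i dm, 0 ≤ r i dm)
    -- feasible forwarding strategy
    (φm : V → Option V → V × M → ℝ) (φp : V → V → V × M → ℝ)
    (hφm0 : ∀ i j dm, 0 ≤ φm i j dm) (hφm1 : ∀ i j dm, φm i j dm ≤ 1)
    (hφp0 : ∀ i j dm, 0 ≤ φp i j dm) (hφp1 : ∀ i j dm, φp i j dm ≤ 1)
    (hφmE : ∀ i j dm, (i, j) ∉ E → φm i (some j) dm = 0)
    (hφpE : ∀ i j dm, (i, j) ∉ E → φp i j dm = 0)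
    (hφmsum : ∀ dm ∈ Tsk, ∀ i : V, φm i none dm + ∑ j, φm i (some j) dm = 1)
    (hφpsum : ∀ dm ∈ Tsk, ∀ i : V, i ≠ dm.1 → ∑ j, φp i j dm = 1)
    (hφpdest : ∀ dm ∈ Tsk, ∀ j, φp dm.1 j dm = 0)
    -- traffic vectors
    (tm tp : V → V × M → ℝ)
    (htm0 : ∀ i dm, 0 ≤ tm i dm) (htp0 : ∀ i dm, 0 ≤ tp i dm)
    (g : V → V × M → ℝ) (hg : ∀ i dm, g i dm = tm i dm * φm i none dm)
    (htm : ∀ dm ∈ Tsk, ∀ i : V, tm i dm = r i dm + ∑ j, tm j dm * φm j (some i) dm)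
    (htp : ∀ dm ∈ Tsk, ∀ i : V, tp i dm = g i dm + ∑ j, tp j dm * φp j i dm)
    -- link flows and workloads
    (F : V → V → ℝ)
    (hF : ∀ i j, F i j = ∑ dm ∈ Tsk,
      (Lm dm.2 * (tm i dm * φm i (some j) dm) + Lp dm.2 * (tp i dm * φp i j dm)))
    (G : V → ℝ) (hG : ∀ i, G i = ∑ dm ∈ Tsk, w i dm.2 * g i dm)
    -- costs
    (D D' : V → V → ℝ → ℝ) (C C' : V → ℝ → ℝ)
    (hDmono : ∀ i j, Monotone (D i j))
    (hDconv : ∀ i j, ConvexOn ℝ Set.univ (D i j))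
    (hDderiv : ∀ i j x, HasDerivAt (D i j) (D' i j x) x)
    (hCmono : ∀ i, Monotone (C i))
    (hCconv : ∀ i, ConvexOn ℝ Set.univ (C i))
    (hCderiv : ∀ i x, HasDerivAt (C i) (C' i x) x)
    -- marginal vectors
    (σ ρ : V → V × M → ℝ)
    (hσd : ∀ dm ∈ Tsk, σ dm.1 dm = 0)
    (hσ : ∀ dm ∈ Tsk, ∀ i : V, i ≠ dm.1 →
      σ i dm = ∑ j ∈ univ.filter (fun j => (i, j) ∈ E),
        φp i j dm * (Lp dm.2 * D' i j (F i j) + σ j dm))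
    (hρ : ∀ dm ∈ Tsk, ∀ i : V,
      ρ i dm = (∑ j ∈ univ.filter (fun j => (i, j) ∈ E),
          φm i (some j) dm * (Lm dm.2 * D' i j (F i j) + ρ j dm))
        + φm i none dm * (w i dm.2 * C' i (G i) + σ i dm))
    -- marginal link/CPU costs
    (δm : V → Option V → V × M → ℝ) (δp : V → V → V × M → ℝ)
    (hδms : ∀ i j dm, δm i (some j) dm = Lm dm.2 * D' i j (F i j) + ρ j dm)
    (hδmn : ∀ i dm, δm i none dm = w i dm.2 * C' i (G i) + σ i dm)
    (hδp : ∀ i j dm, δp i j dm = Lp dm.2 * D' i j (F i j) + σ j dm)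
    -- sufficiency condition (8)
    (hsuffm : ∀ dm ∈ Tsk, ∀ i : V,
      ∀ j ∈ insert (none : Option V) ((univ.filter (fun j => (i, j) ∈ E)).image some),
        0 < φm i j dm →
        ∀ k ∈ insert (none : Option V) ((univ.filter (fun j => (i, j) ∈ E)).image some),
          δm i j dm ≤ δm i k dm)
    (hsuffp : ∀ dm ∈ Tsk, ∀ i : V, i ≠ dm.1 →
      ∀ j : V, (i, j) ∈ E → 0 < φp i j dm →
        ∀ k : V, (i, k) ∈ E → δp i j dm ≤ δp i k dm)
    -- flow-feasible competitor
    (fm' fp' : V → V → V × M → ℝ) (g' : V → V × M → ℝ)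
    (hfm'0 : ∀ i j dm, 0 ≤ fm' i j dm) (hfp'0 : ∀ i j dm, 0 ≤ fp' i j dm)
    (hg'0 : ∀ i dm, 0 ≤ g' i dm)
    (hfm'E : ∀ i j dm, (i, j) ∉ E → fm' i j dm = 0)
    (hfp'E : ∀ i j dm, (i, j) ∉ E → fp' i j dm = 0)
    (hfm'c : ∀ dm ∈ Tsk, ∀ i : V,
      (∑ j ∈ univ.filter (fun j => (i, j) ∈ E), fm' i j dm) + g' i dm
        = (∑ j ∈ univ.filter (fun j => (i, j) ∈ E), fm' j i dm) + r i dm)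
    (hfp'c : ∀ dm ∈ Tsk, ∀ i : V, i ≠ dm.1 →
      (∑ j ∈ univ.filter (fun j => (i, j) ∈ E), fp' i j dm)
        = (∑ j ∈ univ.filter (fun j => (i, j) ∈ E), fp' j i dm) + g' i dm)
    (hfp'd : ∀ dm ∈ Tsk, ∀ j, fp' dm.1 j dm = 0)
    (F' : V → V → ℝ)
    (hF' : ∀ i j, F' i j = ∑ dm ∈ Tsk, (Lm dm.2 * fm' i j dm + Lp dm.2 * fp' i j dm))
    (G' : V → ℝ) (hG' : ∀ i, G' i = ∑ dm ∈ Tsk, w i dm.2 * g' i dm) :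
    (∑ e ∈ E, D e.1 e.2 (F e.1 e.2)) + ∑ i, C i (G i)
      ≤ (∑ e ∈ E, D e.1 e.2 (F' e.1 e.2)) + ∑ i, C i (G' i) := by

  classical
  -- min-combination facts for ρ
  have hSsum : ∀ dm ∈ Tsk, ∀ i : V,
      ∑ j ∈ insert (none : Option V) ((univ.filter (fun j => (i, j) ∈ E)).image some),
        φm i j dm = 1 := by
    intro dm hdm i
    rw [Finset.sum_insert (by simp),
      Finset.sum_image (fun x _ y _ h => Option.some.inj h)]
    have hext : ∑ j ∈ univ.filter (fun j => (i, j) ∈ E), φm i (some j) dm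
        = ∑ j, φm i (some j) dm :=
      Finset.sum_subset (Finset.filter_subset _ _)
        (fun j _ hj => hφmE i j dm (by simpa using hj))
    rw [hext]
    exact hφmsum dm hdm i
  have hcombρ : ∀ dm ∈ Tsk, ∀ i : V,
      ρ i dm = ∑ j ∈ insert (none : Option V)
        ((univ.filter (fun j => (i, j) ∈ E)).image some), φm i j dm * δm i j dm := by
    intro dm hdm i
    rw [Finset.sum_insert (by simp),
      Finset.sum_image (fun x _ y _ h => Option.some.inj h)]
    have hs : ∑ j ∈ univ.filter (fun j => (i, j) ∈ E), φm i (some j) dm * δm i (some j) dm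
        = ∑ j ∈ univ.filter (fun j => (i, j) ∈ E),
            φm i (some j) dm * (Lm dm.2 * D' i j (F i j) + ρ j dm) :=
      Finset.sum_congr rfl fun j _ => by rw [hδms]
    rw [hs, hδmn, hρ dm hdm i]
    ring
  have hρle : ∀ dm ∈ Tsk, ∀ i : V, ∀ k ∈ insert (none : Option V)
      ((univ.filter (fun j => (i, j) ∈ E)).image some), ρ i dm ≤ δm i k dm := by
    intro dm hdm i k hk
    rw [hcombρ dm hdm i]
    exact comb_le _ _ _ (fun j _ => hφm0 i j dm) (hSsum dm hdm i) (hsuffm dm hdm i) hk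
  have hρge : ∀ dm ∈ Tsk, ∀ i : V, ∀ k ∈ insert (none : Option V)
      ((univ.filter (fun j => (i, j) ∈ E)).image some),
      0 < φm i k dm → δm i k dm ≤ ρ i dm := by
    intro dm hdm i k hk hpos
    rw [hcombρ dm hdm i]
    exact comb_ge _ _ (fun j => δm i j dm) (fun j _ => hφm0 i j dm) (hSsum dm hdm i) hk
      (hsuffm dm hdm i k hk hpos)
  -- min-combination facts for σ
  have hNsum : ∀ dm ∈ Tsk, ∀ i : V, i ≠ dm.1 →
      ∑ j ∈ univ.filter (fun j => (i, j) ∈ E), φp i j dm = 1 := by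
    intro dm hdm i hne
    have hext : ∑ j ∈ univ.filter (fun j => (i, j) ∈ E), φp i j dm = ∑ j, φp i j dm :=
      Finset.sum_subset (Finset.filter_subset _ _)
        (fun j _ hj => hφpE i j dm (by simpa using hj))
    rw [hext]
    exact hφpsum dm hdm i hne
  have hcombσ : ∀ dm ∈ Tsk, ∀ i : V, i ≠ dm.1 →
      σ i dm = ∑ j ∈ univ.filter (fun j => (i, j) ∈ E), φp i j dm * δp i j dm := by
    intro dm hdm i hne
    rw [hσ dm hdm i hne]
    exact Finset.sum_congr rfl fun j _ => by rw [hδp]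
  have hσle : ∀ dm ∈ Tsk, ∀ i : V, i ≠ dm.1 → ∀ k : V, (i, k) ∈ E →
      σ i dm ≤ δp i k dm := by
    intro dm hdm i hne k hk
    rw [hcombσ dm hdm i hne]
    refine comb_le _ _ _ (fun j _ => hφp0 i j dm) (hNsum dm hdm i hne) ?_
      (Finset.mem_filter.2 ⟨Finset.mem_univ _, hk⟩)
    intro j hj hpos k' hk'
    exact hsuffp dm hdm i hne j (Finset.mem_filter.1 hj).2 hpos k' (Finset.mem_filter.1 hk').2
  have hσge : ∀ dm ∈ Tsk, ∀ i : V, i ≠ dm.1 → ∀ k : V, (i, k) ∈ E →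
      0 < φp i k dm → δp i k dm ≤ σ i dm := by
    intro dm hdm i hne k hk hpos
    rw [hcombσ dm hdm i hne]
    refine comb_ge _ _ (fun j => δp i j dm) (fun j _ => hφp0 i j dm) (hNsum dm hdm i hne)
      (Finset.mem_filter.2 ⟨Finset.mem_univ _, hk⟩) ?_
    intro k' hk'
    exact hsuffp dm hdm i hne k hk hpos k' (Finset.mem_filter.1 hk').2
  -- per-task equality for the strategy φ
  have keyφ : ∀ dm ∈ Tsk,
      ∑ i, ρ i dm * r i dm
        = (∑ e ∈ E, (Lm dm.2 * D' e.1 e.2 (F e.1 e.2)) * (tm e.1 dm * φm e.1 (some e.2) dm))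
          + (∑ e ∈ E, (Lp dm.2 * D' e.1 e.2 (F e.1 e.2)) * (tp e.1 dm * φp e.1 e.2 dm))
          + ∑ i, (w i dm.2 * C' i (G i)) * g i dm := by
    intro dm hdm
    have T1 : ∑ e ∈ E, (Lm dm.2 * D' e.1 e.2 (F e.1 e.2) + ρ e.2 dm - ρ e.1 dm)
          * (tm e.1 dm * φm e.1 (some e.2) dm)
        = (∑ e ∈ E, (Lm dm.2 * D' e.1 e.2 (F e.1 e.2)) * (tm e.1 dm * φm e.1 (some e.2) dm))
          - ∑ i, ρ i dm * ((∑ j ∈ univ.filter (fun j => (i, j) ∈ E), tm i dm * φm i (some j) dm)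
              - ∑ j ∈ univ.filter (fun j => (i, j) ∈ E), tm j dm * φm j (some i) dm) :=
      telescope E hEsymm (fun i j => tm i dm * φm i (some j) dm)
        (fun i j => Lm dm.2 * D' i j (F i j)) (fun i => ρ i dm)
    have Hz1 : ∑ e ∈ E, (Lm dm.2 * D' e.1 e.2 (F e.1 e.2) + ρ e.2 dm - ρ e.1 dm)
        * (tm e.1 dm * φm e.1 (some e.2) dm) = 0 := by
      refine Finset.sum_eq_zero fun e he => ?_
      rcases (mul_nonneg (htm0 e.1 dm) (hφm0 e.1 (some e.2) dm)).eq_or_lt with h0 | h0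
      · rw [← h0, mul_zero]
      · have hφpos : 0 < φm e.1 (some e.2) dm := by
          rcases (hφm0 e.1 (some e.2) dm).eq_or_lt with h1 | h1
          · rw [← h1, mul_zero] at h0; exact absurd h0 (lt_irrefl 0)
          · exact h1
        have hmem : (some e.2) ∈ insert (none : Option V)
            ((univ.filter (fun j => (e.1, j) ∈ E)).image some) :=
          Finset.mem_insert_of_mem (Finset.mem_image.2 ⟨e.2,
            Finset.mem_filter.2 ⟨Finset.mem_univ _, he⟩, rfl⟩)
        have h4 : δm e.1 (some e.2) dm = ρ e.1 dm :=
          le_antisymm (hρge dm hdm e.1 _ hmem hφpos) (hρle dm hdm e.1 _ hmem)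
        rw [hδms] at h4
        have hz : Lm dm.2 * D' e.1 e.2 (F e.1 e.2) + ρ e.2 dm - ρ e.1 dm = 0 := by linarith
        rw [hz, zero_mul]
    have Hdiv1 : ∑ i, ρ i dm * ((∑ j ∈ univ.filter (fun j => (i, j) ∈ E),
            tm i dm * φm i (some j) dm)
          - ∑ j ∈ univ.filter (fun j => (i, j) ∈ E), tm j dm * φm j (some i) dm)
        = ∑ i, ρ i dm * (r i dm - g i dm) := by
      refine Finset.sum_congr rfl fun i _ => ?_
      have e1 : ∑ j ∈ univ.filter (fun j => (i, j) ∈ E), tm i dm * φm i (some j) dm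
          = tm i dm - g i dm := by
        rw [← Finset.mul_sum]
        have hx : ∑ j ∈ univ.filter (fun j => (i, j) ∈ E), φm i (some j) dm
            = ∑ j, φm i (some j) dm :=
          Finset.sum_subset (Finset.filter_subset _ _)
            (fun j _ hj => hφmE i j dm (by simpa using hj))
        have h2 : ∑ j, φm i (some j) dm = 1 - φm i none dm := by
          linarith [hφmsum dm hdm i]
        rw [hx, h2, hg i dm]; ring
      have e2 : ∑ j ∈ univ.filter (fun j => (i, j) ∈ E), tm j dm * φm j (some i) dm
          = tm i dm - r i dm := by
        have hx : ∑ j ∈ univ.filter (fun j => (i, j) ∈ E), tm j dm * φm j (some i) dm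
            = ∑ j, tm j dm * φm j (some i) dm :=
          Finset.sum_subset (Finset.filter_subset _ _) (fun j _ hj => by
            have hnE : (i, j) ∉ E := by simpa using hj
            have hnE2 : (j, i) ∉ E := fun hc => hnE (hEsymm _ _ hc)
            rw [hφmE j i dm hnE2, mul_zero])
        rw [hx]; linarith [htm dm hdm i]
      rw [e1, e2]; ring
    have A1 : ∑ e ∈ E, (Lm dm.2 * D' e.1 e.2 (F e.1 e.2)) * (tm e.1 dm * φm e.1 (some e.2) dm)
        = ∑ i, ρ i dm * (r i dm - g i dm) := by
      rw [← Hdiv1]; linarith [T1, Hz1]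
    have A2 : ∑ i, ρ i dm * g i dm
        = ∑ i, (w i dm.2 * C' i (G i) + σ i dm) * g i dm := by
      refine Finset.sum_congr rfl fun i _ => ?_
      have hg0 : (0:ℝ) ≤ g i dm := by
        rw [hg i dm]; exact mul_nonneg (htm0 i dm) (hφm0 i none dm)
      rcases hg0.eq_or_lt with h0 | h0
      · rw [← h0, mul_zero, mul_zero]
      · have hφpos : 0 < φm i none dm := by
          rcases (hφm0 i none dm).eq_or_lt with h1 | h1
          · rw [hg i dm, ← h1, mul_zero] at h0; exact absurd h0 (lt_irrefl 0)
          · exact h1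
        have hmem : (none : Option V) ∈ insert (none : Option V)
            ((univ.filter (fun j => (i, j) ∈ E)).image some) := Finset.mem_insert_self _ _
        have h4 : δm i none dm = ρ i dm :=
          le_antisymm (hρge dm hdm i _ hmem hφpos) (hρle dm hdm i _ hmem)
        rw [hδmn] at h4
        rw [h4]
    have T2 : ∑ e ∈ E, (Lp dm.2 * D' e.1 e.2 (F e.1 e.2) + σ e.2 dm - σ e.1 dm)
          * (tp e.1 dm * φp e.1 e.2 dm)
        = (∑ e ∈ E, (Lp dm.2 * D' e.1 e.2 (F e.1 e.2)) * (tp e.1 dm * φp e.1 e.2 dm))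
          - ∑ i, σ i dm * ((∑ j ∈ univ.filter (fun j => (i, j) ∈ E), tp i dm * φp i j dm)
              - ∑ j ∈ univ.filter (fun j => (i, j) ∈ E), tp j dm * φp j i dm) :=
      telescope E hEsymm (fun i j => tp i dm * φp i j dm)
        (fun i j => Lp dm.2 * D' i j (F i j)) (fun i => σ i dm)
    have Hz2 : ∑ e ∈ E, (Lp dm.2 * D' e.1 e.2 (F e.1 e.2) + σ e.2 dm - σ e.1 dm)
        * (tp e.1 dm * φp e.1 e.2 dm) = 0 := by
      refine Finset.sum_eq_zero fun e he => ?_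
      rcases (mul_nonneg (htp0 e.1 dm) (hφp0 e.1 e.2 dm)).eq_or_lt with h0 | h0
      · rw [← h0, mul_zero]
      · have hφpos : 0 < φp e.1 e.2 dm := by
          rcases (hφp0 e.1 e.2 dm).eq_or_lt with h1 | h1
          · rw [← h1, mul_zero] at h0; exact absurd h0 (lt_irrefl 0)
          · exact h1
        have hne : e.1 ≠ dm.1 := fun heq => by
          rw [heq, hφpdest dm hdm e.2] at hφpos; exact lt_irrefl 0 hφpos
        have h4 : δp e.1 e.2 dm = σ e.1 dm :=
          le_antisymm (hσge dm hdm e.1 hne e.2 he hφpos) (hσle dm hdm e.1 hne e.2 he)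
        rw [hδp] at h4
        have hz : Lp dm.2 * D' e.1 e.2 (F e.1 e.2) + σ e.2 dm - σ e.1 dm = 0 := by linarith
        rw [hz, zero_mul]
    have Hdiv2 : ∑ i, σ i dm * ((∑ j ∈ univ.filter (fun j => (i, j) ∈ E),
            tp i dm * φp i j dm)
          - ∑ j ∈ univ.filter (fun j => (i, j) ∈ E), tp j dm * φp j i dm)
        = ∑ i, σ i dm * g i dm := by
      refine Finset.sum_congr rfl fun i _ => ?_
      by_cases hid : i = dm.1
      · rw [hid, hσd dm hdm, zero_mul, zero_mul]
      · have e1 : ∑ j ∈ univ.filter (fun j => (i, j) ∈ E), tp i dm * φp i j dm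
            = tp i dm := by
          rw [← Finset.mul_sum, hNsum dm hdm i hid, mul_one]
        have e2 : ∑ j ∈ univ.filter (fun j => (i, j) ∈ E), tp j dm * φp j i dm
            = tp i dm - g i dm := by
          have hx : ∑ j ∈ univ.filter (fun j => (i, j) ∈ E), tp j dm * φp j i dm
              = ∑ j, tp j dm * φp j i dm :=
            Finset.sum_subset (Finset.filter_subset _ _) (fun j _ hj => by
              have hnE : (i, j) ∉ E := by simpa using hj
              have hnE2 : (j, i) ∉ E := fun hc => hnE (hEsymm _ _ hc)
              rw [hφpE j i dm hnE2, mul_zero])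
          rw [hx]; linarith [htp dm hdm i]
        rw [e1, e2]; ring
    have A3 : ∑ e ∈ E, (Lp dm.2 * D' e.1 e.2 (F e.1 e.2)) * (tp e.1 dm * φp e.1 e.2 dm)
        = ∑ i, σ i dm * g i dm := by
      rw [← Hdiv2]; linarith [T2, Hz2]
    have X1 : ∑ i, ρ i dm * (r i dm - g i dm)
        = ∑ i, ρ i dm * r i dm - ∑ i, ρ i dm * g i dm := by
      rw [← Finset.sum_sub_distrib]
      exact Finset.sum_congr rfl fun i _ => by ring
    have X2 : ∑ i, (w i dm.2 * C' i (G i) + σ i dm) * g i dm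
        = ∑ i, (w i dm.2 * C' i (G i)) * g i dm + ∑ i, σ i dm * g i dm := by
      rw [← Finset.sum_add_distrib]
      exact Finset.sum_congr rfl fun i _ => by ring
    linarith [A1, A2, A3, X1, X2]
  -- per-task inequality for the competitor
  have keycomp : ∀ dm ∈ Tsk,
      ∑ i, ρ i dm * r i dm
        ≤ (∑ e ∈ E, (Lm dm.2 * D' e.1 e.2 (F e.1 e.2)) * fm' e.1 e.2 dm)
          + (∑ e ∈ E, (Lp dm.2 * D' e.1 e.2 (F e.1 e.2)) * fp' e.1 e.2 dm)
          + ∑ i, (w i dm.2 * C' i (G i)) * g' i dm := by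
    intro dm hdm
    have T1 : ∑ e ∈ E, (Lm dm.2 * D' e.1 e.2 (F e.1 e.2) + ρ e.2 dm - ρ e.1 dm)
          * fm' e.1 e.2 dm
        = (∑ e ∈ E, (Lm dm.2 * D' e.1 e.2 (F e.1 e.2)) * fm' e.1 e.2 dm)
          - ∑ i, ρ i dm * ((∑ j ∈ univ.filter (fun j => (i, j) ∈ E), fm' i j dm)
              - ∑ j ∈ univ.filter (fun j => (i, j) ∈ E), fm' j i dm) :=
      telescope E hEsymm (fun i j => fm' i j dm)
        (fun i j => Lm dm.2 * D' i j (F i j)) (fun i => ρ i dm)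
    have Hz1 : 0 ≤ ∑ e ∈ E, (Lm dm.2 * D' e.1 e.2 (F e.1 e.2) + ρ e.2 dm - ρ e.1 dm)
        * fm' e.1 e.2 dm := by
      refine Finset.sum_nonneg fun e he => ?_
      have hmem : (some e.2) ∈ insert (none : Option V)
          ((univ.filter (fun j => (e.1, j) ∈ E)).image some) :=
        Finset.mem_insert_of_mem (Finset.mem_image.2 ⟨e.2,
          Finset.mem_filter.2 ⟨Finset.mem_univ _, he⟩, rfl⟩)
      have h1 := hρle dm hdm e.1 _ hmem
      rw [hδms] at h1
      exact mul_nonneg (by linarith) (hfm'0 e.1 e.2 dm)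
    have Hdiv1 : ∑ i, ρ i dm * ((∑ j ∈ univ.filter (fun j => (i, j) ∈ E), fm' i j dm)
          - ∑ j ∈ univ.filter (fun j => (i, j) ∈ E), fm' j i dm)
        = ∑ i, ρ i dm * (r i dm - g' i dm) := by
      refine Finset.sum_congr rfl fun i _ => ?_
      have := hfm'c dm hdm i
      have hd : (∑ j ∈ univ.filter (fun j => (i, j) ∈ E), fm' i j dm)
          - ∑ j ∈ univ.filter (fun j => (i, j) ∈ E), fm' j i dm = r i dm - g' i dm := by
        linarith
      rw [hd]
    have A1 : ∑ i, ρ i dm * (r i dm - g' i dm)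
        ≤ ∑ e ∈ E, (Lm dm.2 * D' e.1 e.2 (F e.1 e.2)) * fm' e.1 e.2 dm := by
      rw [← Hdiv1]; linarith [T1, Hz1]
    have A2 : ∑ i, ρ i dm * g' i dm
        ≤ ∑ i, (w i dm.2 * C' i (G i) + σ i dm) * g' i dm := by
      refine Finset.sum_le_sum fun i _ => ?_
      have hmem : (none : Option V) ∈ insert (none : Option V)
          ((univ.filter (fun j => (i, j) ∈ E)).image some) := Finset.mem_insert_self _ _
      have h1 := hρle dm hdm i _ hmem
      rw [hδmn] at h1
      exact mul_le_mul_of_nonneg_right h1 (hg'0 i dm)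
    have T2 : ∑ e ∈ E, (Lp dm.2 * D' e.1 e.2 (F e.1 e.2) + σ e.2 dm - σ e.1 dm)
          * fp' e.1 e.2 dm
        = (∑ e ∈ E, (Lp dm.2 * D' e.1 e.2 (F e.1 e.2)) * fp' e.1 e.2 dm)
          - ∑ i, σ i dm * ((∑ j ∈ univ.filter (fun j => (i, j) ∈ E), fp' i j dm)
              - ∑ j ∈ univ.filter (fun j => (i, j) ∈ E), fp' j i dm) :=
      telescope E hEsymm (fun i j => fp' i j dm)
        (fun i j => Lp dm.2 * D' i j (F i j)) (fun i => σ i dm)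
    have Hz2 : 0 ≤ ∑ e ∈ E, (Lp dm.2 * D' e.1 e.2 (F e.1 e.2) + σ e.2 dm - σ e.1 dm)
        * fp' e.1 e.2 dm := by
      refine Finset.sum_nonneg fun e he => ?_
      by_cases hid : e.1 = dm.1
      · rw [hid, hfp'd dm hdm e.2, mul_zero]
      · have h1 := hσle dm hdm e.1 hid e.2 he
        rw [hδp] at h1
        exact mul_nonneg (by linarith) (hfp'0 e.1 e.2 dm)
    have Hdiv2 : ∑ i, σ i dm * ((∑ j ∈ univ.filter (fun j => (i, j) ∈ E), fp' i j dm)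
          - ∑ j ∈ univ.filter (fun j => (i, j) ∈ E), fp' j i dm)
        = ∑ i, σ i dm * g' i dm := by
      refine Finset.sum_congr rfl fun i _ => ?_
      by_cases hid : i = dm.1
      · rw [hid, hσd dm hdm, zero_mul, zero_mul]
      · have := hfp'c dm hdm i hid
        have hd : (∑ j ∈ univ.filter (fun j => (i, j) ∈ E), fp' i j dm)
            - ∑ j ∈ univ.filter (fun j => (i, j) ∈ E), fp' j i dm = g' i dm := by
          linarith
        rw [hd]
    have A3 : ∑ i, σ i dm * g' i dm
        ≤ ∑ e ∈ E, (Lp dm.2 * D' e.1 e.2 (F e.1 e.2)) * fp' e.1 e.2 dm := by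
      rw [← Hdiv2]; linarith [T2, Hz2]
    have X1 : ∑ i, ρ i dm * (r i dm - g' i dm)
        = ∑ i, ρ i dm * r i dm - ∑ i, ρ i dm * g' i dm := by
      rw [← Finset.sum_sub_distrib]
      exact Finset.sum_congr rfl fun i _ => by ring
    have X2 : ∑ i, (w i dm.2 * C' i (G i) + σ i dm) * g' i dm
        = ∑ i, (w i dm.2 * C' i (G i)) * g' i dm + ∑ i, σ i dm * g' i dm := by
      rw [← Finset.sum_add_distrib]
      exact Finset.sum_congr rfl fun i _ => by ring
    linarith [A1, A2, A3, X1, X2]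
  -- assemble linearized costs
  have Hφ : (∑ e ∈ E, D' e.1 e.2 (F e.1 e.2) * F e.1 e.2) + ∑ i, C' i (G i) * G i
      = ∑ dm ∈ Tsk, ∑ i, ρ i dm * r i dm := by
    have h1 : ∑ e ∈ E, D' e.1 e.2 (F e.1 e.2) * F e.1 e.2
        = ∑ dm ∈ Tsk,
            ((∑ e ∈ E, (Lm dm.2 * D' e.1 e.2 (F e.1 e.2)) * (tm e.1 dm * φm e.1 (some e.2) dm))
              + ∑ e ∈ E, (Lp dm.2 * D' e.1 e.2 (F e.1 e.2)) * (tp e.1 dm * φp e.1 e.2 dm)) := by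
      calc ∑ e ∈ E, D' e.1 e.2 (F e.1 e.2) * F e.1 e.2
          = ∑ e ∈ E, ∑ dm ∈ Tsk,
              ((Lm dm.2 * D' e.1 e.2 (F e.1 e.2)) * (tm e.1 dm * φm e.1 (some e.2) dm)
                + (Lp dm.2 * D' e.1 e.2 (F e.1 e.2)) * (tp e.1 dm * φp e.1 e.2 dm)) := by
            refine Finset.sum_congr rfl fun e _ => ?_
            rw [hF e.1 e.2, Finset.mul_sum]
            exact Finset.sum_congr rfl fun dm _ => by ring
        _ = ∑ dm ∈ Tsk, ∑ e ∈ E,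
              ((Lm dm.2 * D' e.1 e.2 (F e.1 e.2)) * (tm e.1 dm * φm e.1 (some e.2) dm)
                + (Lp dm.2 * D' e.1 e.2 (F e.1 e.2)) * (tp e.1 dm * φp e.1 e.2 dm)) :=
            Finset.sum_comm
        _ = ∑ dm ∈ Tsk,
            ((∑ e ∈ E, (Lm dm.2 * D' e.1 e.2 (F e.1 e.2)) * (tm e.1 dm * φm e.1 (some e.2) dm))
              + ∑ e ∈ E, (Lp dm.2 * D' e.1 e.2 (F e.1 e.2)) * (tp e.1 dm * φp e.1 e.2 dm)) :=
            Finset.sum_congr rfl fun dm _ => Finset.sum_add_distrib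
    have h2 : ∑ i, C' i (G i) * G i = ∑ dm ∈ Tsk, ∑ i, (w i dm.2 * C' i (G i)) * g i dm := by
      calc ∑ i, C' i (G i) * G i
          = ∑ i, ∑ dm ∈ Tsk, (w i dm.2 * C' i (G i)) * g i dm := by
            refine Finset.sum_congr rfl fun i _ => ?_
            rw [hG i, Finset.mul_sum]
            exact Finset.sum_congr rfl fun dm _ => by ring
        _ = ∑ dm ∈ Tsk, ∑ i, (w i dm.2 * C' i (G i)) * g i dm := Finset.sum_comm
    rw [h1, h2, ← Finset.sum_add_distrib]
    exact Finset.sum_congr rfl fun dm hdm => (keyφ dm hdm).symm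
  have Hcomp : ∑ dm ∈ Tsk, ∑ i, ρ i dm * r i dm
      ≤ (∑ e ∈ E, D' e.1 e.2 (F e.1 e.2) * F' e.1 e.2) + ∑ i, C' i (G i) * G' i := by
    have h1 : ∑ e ∈ E, D' e.1 e.2 (F e.1 e.2) * F' e.1 e.2
        = ∑ dm ∈ Tsk,
            ((∑ e ∈ E, (Lm dm.2 * D' e.1 e.2 (F e.1 e.2)) * fm' e.1 e.2 dm)
              + ∑ e ∈ E, (Lp dm.2 * D' e.1 e.2 (F e.1 e.2)) * fp' e.1 e.2 dm) := by
      calc ∑ e ∈ E, D' e.1 e.2 (F e.1 e.2) * F' e.1 e.2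
          = ∑ e ∈ E, ∑ dm ∈ Tsk,
              ((Lm dm.2 * D' e.1 e.2 (F e.1 e.2)) * fm' e.1 e.2 dm
                + (Lp dm.2 * D' e.1 e.2 (F e.1 e.2)) * fp' e.1 e.2 dm) := by
            refine Finset.sum_congr rfl fun e _ => ?_
            rw [hF' e.1 e.2, Finset.mul_sum]
            exact Finset.sum_congr rfl fun dm _ => by ring
        _ = ∑ dm ∈ Tsk, ∑ e ∈ E,
              ((Lm dm.2 * D' e.1 e.2 (F e.1 e.2)) * fm' e.1 e.2 dm
                + (Lp dm.2 * D' e.1 e.2 (F e.1 e.2)) * fp' e.1 e.2 dm) :=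
            Finset.sum_comm
        _ = ∑ dm ∈ Tsk,
            ((∑ e ∈ E, (Lm dm.2 * D' e.1 e.2 (F e.1 e.2)) * fm' e.1 e.2 dm)
              + ∑ e ∈ E, (Lp dm.2 * D' e.1 e.2 (F e.1 e.2)) * fp' e.1 e.2 dm) :=
            Finset.sum_congr rfl fun dm _ => Finset.sum_add_distrib
    have h2 : ∑ i, C' i (G i) * G' i = ∑ dm ∈ Tsk, ∑ i, (w i dm.2 * C' i (G i)) * g' i dm := by
      calc ∑ i, C' i (G i) * G' i
          = ∑ i, ∑ dm ∈ Tsk, (w i dm.2 * C' i (G i)) * g' i dm := by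
            refine Finset.sum_congr rfl fun i _ => ?_
            rw [hG' i, Finset.mul_sum]
            exact Finset.sum_congr rfl fun dm _ => by ring
        _ = ∑ dm ∈ Tsk, ∑ i, (w i dm.2 * C' i (G i)) * g' i dm := Finset.sum_comm
    rw [h1, h2, ← Finset.sum_add_distrib]
    exact Finset.sum_le_sum fun dm hdm => keycomp dm hdm
  -- convexity (first-order condition)
  have S1 : ∑ e ∈ E, (D e.1 e.2 (F e.1 e.2) + D' e.1 e.2 (F e.1 e.2) * (F' e.1 e.2 - F e.1 e.2))
      ≤ ∑ e ∈ E, D e.1 e.2 (F' e.1 e.2) :=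
    Finset.sum_le_sum fun e _ => cvx_grad (hDconv e.1 e.2) (hDderiv e.1 e.2 (F e.1 e.2)) _
  have S1' : ∑ e ∈ E, (D e.1 e.2 (F e.1 e.2) + D' e.1 e.2 (F e.1 e.2) * (F' e.1 e.2 - F e.1 e.2))
      = (∑ e ∈ E, D e.1 e.2 (F e.1 e.2)) + ((∑ e ∈ E, D' e.1 e.2 (F e.1 e.2) * F' e.1 e.2)
          - ∑ e ∈ E, D' e.1 e.2 (F e.1 e.2) * F e.1 e.2) := by
    rw [← Finset.sum_sub_distrib, ← Finset.sum_add_distrib]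
    exact Finset.sum_congr rfl fun e _ => by ring
  have S2 : ∑ i, (C i (G i) + C' i (G i) * (G' i - G i)) ≤ ∑ i, C i (G' i) :=
    Finset.sum_le_sum fun i _ => cvx_grad (hCconv i) (hCderiv i (G i)) _
  have S2' : ∑ i, (C i (G i) + C' i (G i) * (G' i - G i))
      = (∑ i, C i (G i)) + ((∑ i, C' i (G i) * G' i) - ∑ i, C' i (G i) * G i) := by
    rw [← Finset.sum_sub_distrib, ← Finset.sum_add_distrib]
    exact Finset.sum_congr rfl fun i _ => by ring
  linarith [Hφ, Hcomp, S1, S1', S2, S2']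
end

section
/- Suppose φ is a feasible forwarding strategy, t⁻, t⁺ are nonnegative traffic vectors solving the traffic equations, and ρ, σ are marginal vectors solving the marginal recursions (with σ_d(d,m) = 0). Then the following exact identity holds: Σ_{i∈V} C'_i(G_i)·G_i + Σ_{(i,j)∈E} D'_{ij}(F_{ij})·F_{ij} = Σ_{i∈V} Σ_{(d,m)∈T} ρ_i(d,m)·r_i(d,m). -/
open Finset

/-- Exact marginal identity: for any feasible strategy with traffic vectors solving the
traffic equations and marginal vectors solving the marginal recursions,
`Σ_i C'_i(G_i)·G_i + Σ_{(i,j)∈E} D'_{ij}(F_{ij})·F_{ij} = Σ_i Σ_{(d,m)∈T} ρ_i(d,m)·r_i(d,m)`. -/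
theorem stmt_4
    {V M : Type*} [Fintype V] [DecidableEq V] [Fintype M] [DecidableEq M]
    -- network
    (E : Finset (V × V))
    (hEsymm : ∀ i j : V, (i, j) ∈ E → (j, i) ∈ E)
    (hEirrefl : ∀ i : V, (i, i) ∉ E)
    (Tsk : Finset (V × M))
    (Lm Lp : M → ℝ) (hLm : ∀ m, 0 < Lm m) (hLp : ∀ m, 0 < Lp m)
    (w : V → M → ℝ) (hw : ∀ i m, 0 < w i m)
    (r : V → V × M → ℝ) (hr : ∀ i dm, 0 ≤ r i dm)
    -- feasible forwarding strategy
    (φm : V → Option V → V × M → ℝ) (φp : V → V → V × M → ℝ)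
    (hφm0 : ∀ i j dm, 0 ≤ φm i j dm) (hφm1 : ∀ i j dm, φm i j dm ≤ 1)
    (hφp0 : ∀ i j dm, 0 ≤ φp i j dm) (hφp1 : ∀ i j dm, φp i j dm ≤ 1)
    (hφmE : ∀ i j dm, (i, j) ∉ E → φm i (some j) dm = 0)
    (hφpE : ∀ i j dm, (i, j) ∉ E → φp i j dm = 0)
    (hφmsum : ∀ dm ∈ Tsk, ∀ i : V, φm i none dm + ∑ j, φm i (some j) dm = 1)
    (hφpsum : ∀ dm ∈ Tsk, ∀ i : V, i ≠ dm.1 → ∑ j, φp i j dm = 1)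
    (hφpdest : ∀ dm ∈ Tsk, ∀ j, φp dm.1 j dm = 0)
    -- traffic vectors
    (tm tp : V → V × M → ℝ)
    (htm0 : ∀ i dm, 0 ≤ tm i dm) (htp0 : ∀ i dm, 0 ≤ tp i dm)
    (g : V → V × M → ℝ) (hg : ∀ i dm, g i dm = tm i dm * φm i none dm)
    (htm : ∀ dm ∈ Tsk, ∀ i : V, tm i dm = r i dm + ∑ j, tm j dm * φm j (some i) dm)
    (htp : ∀ dm ∈ Tsk, ∀ i : V, tp i dm = g i dm + ∑ j, tp j dm * φp j i dm)
    -- link flows and workloads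
    (F : V → V → ℝ)
    (hF : ∀ i j, F i j = ∑ dm ∈ Tsk,
      (Lm dm.2 * (tm i dm * φm i (some j) dm) + Lp dm.2 * (tp i dm * φp i j dm)))
    (G : V → ℝ) (hG : ∀ i, G i = ∑ dm ∈ Tsk, w i dm.2 * g i dm)
    -- costs
    (D D' : V → V → ℝ → ℝ) (C C' : V → ℝ → ℝ)
    (hDmono : ∀ i j, Monotone (D i j))
    (hDconv : ∀ i j, ConvexOn ℝ Set.univ (D i j))
    (hDderiv : ∀ i j x, HasDerivAt (D i j) (D' i j x) x)
    (hCmono : ∀ i, Monotone (C i))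
    (hCconv : ∀ i, ConvexOn ℝ Set.univ (C i))
    (hCderiv : ∀ i x, HasDerivAt (C i) (C' i x) x)
    -- marginal vectors
    (σ ρ : V → V × M → ℝ)
    (hσd : ∀ dm ∈ Tsk, σ dm.1 dm = 0)
    (hσ : ∀ dm ∈ Tsk, ∀ i : V, i ≠ dm.1 →
      σ i dm = ∑ j ∈ univ.filter (fun j => (i, j) ∈ E),
        φp i j dm * (Lp dm.2 * D' i j (F i j) + σ j dm))
    (hρ : ∀ dm ∈ Tsk, ∀ i : V,
      ρ i dm = (∑ j ∈ univ.filter (fun j => (i, j) ∈ E),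
          φm i (some j) dm * (Lm dm.2 * D' i j (F i j) + ρ j dm))
        + φm i none dm * (w i dm.2 * C' i (G i) + σ i dm))
    :
    (∑ i, C' i (G i) * G i) + (∑ e ∈ E, D' e.1 e.2 (F e.1 e.2) * F e.1 e.2)
      = ∑ i, ∑ dm ∈ Tsk, ρ i dm * r i dm := by
  classical
  -- Per-task identity
  have key : ∀ dm ∈ Tsk,
      ∑ i, ρ i dm * r i dm
        = (∑ i, ∑ j, D' i j (F i j) * (Lm dm.2 * (tm i dm * φm i (some j) dm)))
          + (∑ i, ∑ j, D' i j (F i j) * (Lp dm.2 * (tp i dm * φp i j dm)))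
          + ∑ i, w i dm.2 * g i dm * C' i (G i) := by
    intro dm hdm
    -- full-sum versions of the recursions
    have hρfull : ∀ i, ρ i dm
        = (∑ j, φm i (some j) dm * (Lm dm.2 * D' i j (F i j) + ρ j dm))
          + φm i none dm * (w i dm.2 * C' i (G i) + σ i dm) := by
      intro i
      rw [hρ dm hdm i]
      congr 1
      refine Finset.sum_subset (Finset.filter_subset _ _) ?_
      intro j _ hj
      simp only [Finset.mem_filter, Finset.mem_univ, true_and] at hj
      rw [hφmE i j dm hj, zero_mul]
    have hσfull : ∀ i, σ i dm
        = ∑ j, φp i j dm * (Lp dm.2 * D' i j (F i j) + σ j dm) := by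
      intro i
      by_cases hi : i = dm.1
      · subst hi
        rw [hσd dm hdm]
        symm
        refine Finset.sum_eq_zero fun j _ => ?_
        rw [hφpdest dm hdm j, zero_mul]
      · rw [hσ dm hdm i hi]
        refine Finset.sum_subset (Finset.filter_subset _ _) ?_
        intro j _ hj
        simp only [Finset.mem_filter, Finset.mem_univ, true_and] at hj
        rw [hφpE i j dm hj, zero_mul]
    -- step 1: balance for tm · ρ via the traffic equation
    have e1 : ∑ i, tm i dm * ρ i dm
        = (∑ i, ρ i dm * r i dm) + ∑ i, ∑ j, tm i dm * φm i (some j) dm * ρ j dm := by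
      have : ∑ i, tm i dm * ρ i dm
          = ∑ i, (r i dm * ρ i dm + ∑ j, tm j dm * φm j (some i) dm * ρ i dm) := by
        refine Finset.sum_congr rfl fun i _ => ?_
        rw [htm dm hdm i, add_mul, Finset.sum_mul]
      rw [this, Finset.sum_add_distrib]
      congr 1
      · exact Finset.sum_congr rfl fun i _ => by ring
      · rw [Finset.sum_comm]
    -- step 2: balance for tm · ρ via the ρ recursion
    have e2 : ∑ i, tm i dm * ρ i dm
        = ((∑ i, ∑ j, D' i j (F i j) * (Lm dm.2 * (tm i dm * φm i (some j) dm)))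
            + ∑ i, ∑ j, tm i dm * φm i (some j) dm * ρ j dm)
          + ∑ i, g i dm * (w i dm.2 * C' i (G i) + σ i dm) := by
      have : ∑ i, tm i dm * ρ i dm
          = ∑ i, ((∑ j, (D' i j (F i j) * (Lm dm.2 * (tm i dm * φm i (some j) dm))
                + tm i dm * φm i (some j) dm * ρ j dm))
              + g i dm * (w i dm.2 * C' i (G i) + σ i dm)) := by
        refine Finset.sum_congr rfl fun i _ => ?_
        rw [hρfull i, mul_add, Finset.mul_sum, hg i dm]
        congr 1
        · exact Finset.sum_congr rfl fun j _ => by ring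
        · ring
      rw [this, Finset.sum_add_distrib]
      congr 1
      rw [← Finset.sum_add_distrib]
      exact Finset.sum_congr rfl fun i _ => Finset.sum_add_distrib
    -- step 3: balance for tp · σ via the σ recursion
    have f1 : ∑ i, tp i dm * σ i dm
        = (∑ i, ∑ j, D' i j (F i j) * (Lp dm.2 * (tp i dm * φp i j dm)))
          + ∑ i, ∑ j, tp i dm * φp i j dm * σ j dm := by
      have : ∑ i, tp i dm * σ i dm
          = ∑ i, ∑ j, (D' i j (F i j) * (Lp dm.2 * (tp i dm * φp i j dm))
              + tp i dm * φp i j dm * σ j dm) := by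
        refine Finset.sum_congr rfl fun i _ => ?_
        rw [hσfull i, Finset.mul_sum]
        exact Finset.sum_congr rfl fun j _ => by ring
      rw [this, ← Finset.sum_add_distrib]
      exact Finset.sum_congr rfl fun i _ => Finset.sum_add_distrib
    -- step 4: balance for tp · σ via the traffic equation
    have f2 : ∑ i, tp i dm * σ i dm
        = (∑ i, g i dm * σ i dm) + ∑ i, ∑ j, tp i dm * φp i j dm * σ j dm := by
      have : ∑ i, tp i dm * σ i dm
          = ∑ i, (g i dm * σ i dm + ∑ j, tp j dm * φp j i dm * σ i dm) := by
        refine Finset.sum_congr rfl fun i _ => ?_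
        rw [htp dm hdm i, add_mul, Finset.sum_mul]
      rw [this, Finset.sum_add_distrib]
      congr 1
      rw [Finset.sum_comm]
    have f3 : ∑ i, g i dm * σ i dm
        = ∑ i, ∑ j, D' i j (F i j) * (Lp dm.2 * (tp i dm * φp i j dm)) := by
      linarith [f1, f2]
    have e4 : ∑ i, g i dm * (w i dm.2 * C' i (G i) + σ i dm)
        = (∑ i, w i dm.2 * g i dm * C' i (G i)) + ∑ i, g i dm * σ i dm := by
      rw [← Finset.sum_add_distrib]
      exact Finset.sum_congr rfl fun i _ => by ring
    linarith [e1, e2, f3, e4]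
  -- Global assembly
  have hC : ∑ i, C' i (G i) * G i
      = ∑ dm ∈ Tsk, ∑ i, w i dm.2 * g i dm * C' i (G i) := by
    rw [Finset.sum_comm]
    refine Finset.sum_congr rfl fun i _ => ?_
    rw [hG i, mul_comm, Finset.sum_mul]
  have hDsum : ∑ e ∈ E, D' e.1 e.2 (F e.1 e.2) * F e.1 e.2
      = ∑ dm ∈ Tsk,
          ((∑ i, ∑ j, D' i j (F i j) * (Lm dm.2 * (tm i dm * φm i (some j) dm)))
            + ∑ i, ∑ j, D' i j (F i j) * (Lp dm.2 * (tp i dm * φp i j dm))) := by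
    have hzero : ∀ e : V × V, e ∉ E → D' e.1 e.2 (F e.1 e.2) * F e.1 e.2 = 0 := by
      intro e he
      have hF0 : F e.1 e.2 = 0 := by
        rw [hF]
        refine Finset.sum_eq_zero fun dm _ => ?_
        rw [hφmE e.1 e.2 dm he, hφpE e.1 e.2 dm he]
        ring
      rw [hF0, mul_zero]
    rw [Finset.sum_subset (Finset.subset_univ E) (fun e _ he => hzero e he)]
    rw [Fintype.sum_prod_type]
    have : ∀ i j : V, D' i j (F i j) * F i j
        = ∑ dm ∈ Tsk, (D' i j (F i j) * (Lm dm.2 * (tm i dm * φm i (some j) dm))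
            + D' i j (F i j) * (Lp dm.2 * (tp i dm * φp i j dm))) := by
      intro i j
      nth_rewrite 2 [hF i j]
      rw [Finset.mul_sum]
      exact Finset.sum_congr rfl fun dm _ => by ring
    calc (∑ i, ∑ j, D' i j (F i j) * F i j)
        = ∑ i, ∑ j, ∑ dm ∈ Tsk,
            (D' i j (F i j) * (Lm dm.2 * (tm i dm * φm i (some j) dm))
              + D' i j (F i j) * (Lp dm.2 * (tp i dm * φp i j dm))) := by
          exact Finset.sum_congr rfl fun i _ => Finset.sum_congr rfl fun j _ => this i j
      _ = ∑ dm ∈ Tsk, ∑ i, ∑ j,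
            (D' i j (F i j) * (Lm dm.2 * (tm i dm * φm i (some j) dm))
              + D' i j (F i j) * (Lp dm.2 * (tp i dm * φp i j dm))) := by
          exact (Finset.sum_congr rfl fun i _ => Finset.sum_comm).trans Finset.sum_comm
      _ = _ := by
          refine Finset.sum_congr rfl fun dm _ => ?_
          rw [← Finset.sum_add_distrib]
          exact Finset.sum_congr rfl fun i _ => Finset.sum_add_distrib
  rw [Finset.sum_comm (f := fun i dm => ρ i dm * r i dm)]
  rw [Finset.sum_congr rfl key, hC, hDsum, ← Finset.sum_add_distrib]
  refine Finset.sum_congr rfl fun dm _ => by ring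
end

section
/- Suppose φ is a feasible forwarding strategy with nonnegative traffic vectors t⁻, t⁺ solving the traffic equations and marginal vectors ρ, σ solving the marginal recursions, and suppose that δ⁻_{ij}(d,m) ≥ ρ_i(d,m) for every node i, task (d,m) and j ∈ {0} ∪ N_i. Then for every flow-feasible competitor (f⁻*, f⁺*, g*): Σ_{i∈V} C'_i(G_i)·G*_i + Σ_{(i,j)∈E} D'_{ij}(F_{ij})·F⁻*_{ij} ≥ Σ_{i∈V} Σ_{(d,m)∈T} ρ_i(d,m)·r_i(d,m) − Σ_{i∈V} Σ_{(d,m)∈T} g*_i(d,m)·σ_i(d,m), where F⁻*_{ij} = Σ_{(d,m)∈T} L⁻_m f⁻*_{ij}(d,m). -/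
open Finset

/-- Data-flow inequality: if every marginal link/CPU cost `δ⁻_{ij}(d,m)` dominates `ρ_i(d,m)`,
then for any flow-feasible competitor,
`Σ_i C'_i(G_i)·G*_i + Σ_{(i,j)∈E} D'_{ij}(F_{ij})·F⁻*_{ij}
  ≥ Σ_{i,(d,m)} ρ_i(d,m)·r_i(d,m) − Σ_{i,(d,m)} g*_i(d,m)·σ_i(d,m)`. -/
theorem stmt_5
    {V M : Type*} [Fintype V] [DecidableEq V] [Fintype M] [DecidableEq M]
    -- network
    (E : Finset (V × V))
    (hEsymm : ∀ i j : V, (i, j) ∈ E → (j, i) ∈ E)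
    (hEirrefl : ∀ i : V, (i, i) ∉ E)
    (Tsk : Finset (V × M))
    (Lm Lp : M → ℝ) (hLm : ∀ m, 0 < Lm m) (hLp : ∀ m, 0 < Lp m)
    (w : V → M → ℝ) (hw : ∀ i m, 0 < w i m)
    (r : V → V × M → ℝ) (hr : ∀ i dm, 0 ≤ r i dm)
    -- feasible forwarding strategy
    (φm : V → Option V → V × M → ℝ) (φp : V → V → V × M → ℝ)
    (hφm0 : ∀ i j dm, 0 ≤ φm i j dm) (hφm1 : ∀ i j dm, φm i j dm ≤ 1)
    (hφp0 : ∀ i j dm, 0 ≤ φp i j dm) (hφp1 : ∀ i j dm, φp i j dm ≤ 1)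
    (hφmE : ∀ i j dm, (i, j) ∉ E → φm i (some j) dm = 0)
    (hφpE : ∀ i j dm, (i, j) ∉ E → φp i j dm = 0)
    (hφmsum : ∀ dm ∈ Tsk, ∀ i : V, φm i none dm + ∑ j, φm i (some j) dm = 1)
    (hφpsum : ∀ dm ∈ Tsk, ∀ i : V, i ≠ dm.1 → ∑ j, φp i j dm = 1)
    (hφpdest : ∀ dm ∈ Tsk, ∀ j, φp dm.1 j dm = 0)
    -- traffic vectors
    (tm tp : V → V × M → ℝ)
    (htm0 : ∀ i dm, 0 ≤ tm i dm) (htp0 : ∀ i dm, 0 ≤ tp i dm)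
    (g : V → V × M → ℝ) (hg : ∀ i dm, g i dm = tm i dm * φm i none dm)
    (htm : ∀ dm ∈ Tsk, ∀ i : V, tm i dm = r i dm + ∑ j, tm j dm * φm j (some i) dm)
    (htp : ∀ dm ∈ Tsk, ∀ i : V, tp i dm = g i dm + ∑ j, tp j dm * φp j i dm)
    -- link flows and workloads
    (F : V → V → ℝ)
    (hF : ∀ i j, F i j = ∑ dm ∈ Tsk,
      (Lm dm.2 * (tm i dm * φm i (some j) dm) + Lp dm.2 * (tp i dm * φp i j dm)))
    (G : V → ℝ) (hG : ∀ i, G i = ∑ dm ∈ Tsk, w i dm.2 * g i dm)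
    -- costs
    (D D' : V → V → ℝ → ℝ) (C C' : V → ℝ → ℝ)
    (hDmono : ∀ i j, Monotone (D i j))
    (hDconv : ∀ i j, ConvexOn ℝ Set.univ (D i j))
    (hDderiv : ∀ i j x, HasDerivAt (D i j) (D' i j x) x)
    (hCmono : ∀ i, Monotone (C i))
    (hCconv : ∀ i, ConvexOn ℝ Set.univ (C i))
    (hCderiv : ∀ i x, HasDerivAt (C i) (C' i x) x)
    -- marginal vectors
    (σ ρ : V → V × M → ℝ)
    (hσd : ∀ dm ∈ Tsk, σ dm.1 dm = 0)
    (hσ : ∀ dm ∈ Tsk, ∀ i : V, i ≠ dm.1 →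
      σ i dm = ∑ j ∈ univ.filter (fun j => (i, j) ∈ E),
        φp i j dm * (Lp dm.2 * D' i j (F i j) + σ j dm))
    (hρ : ∀ dm ∈ Tsk, ∀ i : V,
      ρ i dm = (∑ j ∈ univ.filter (fun j => (i, j) ∈ E),
          φm i (some j) dm * (Lm dm.2 * D' i j (F i j) + ρ j dm))
        + φm i none dm * (w i dm.2 * C' i (G i) + σ i dm))

    -- marginal link/CPU costs (data side)
    (δm : V → Option V → V × M → ℝ)
    (hδms : ∀ i j dm, δm i (some j) dm = Lm dm.2 * D' i j (F i j) + ρ j dm)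
    (hδmn : ∀ i dm, δm i none dm = w i dm.2 * C' i (G i) + σ i dm)
    -- hypothesis: δ⁻ dominates ρ
    (hδρ : ∀ dm ∈ Tsk, ∀ i : V,
      ∀ j ∈ insert (none : Option V) ((univ.filter (fun j => (i, j) ∈ E)).image some),
        ρ i dm ≤ δm i j dm)
    -- flow-feasible competitor
    (fm' fp' : V → V → V × M → ℝ) (g' : V → V × M → ℝ)
    (hfm'0 : ∀ i j dm, 0 ≤ fm' i j dm) (hfp'0 : ∀ i j dm, 0 ≤ fp' i j dm)
    (hg'0 : ∀ i dm, 0 ≤ g' i dm)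
    (hfm'E : ∀ i j dm, (i, j) ∉ E → fm' i j dm = 0)
    (hfp'E : ∀ i j dm, (i, j) ∉ E → fp' i j dm = 0)
    (hfm'c : ∀ dm ∈ Tsk, ∀ i : V,
      (∑ j ∈ univ.filter (fun j => (i, j) ∈ E), fm' i j dm) + g' i dm
        = (∑ j ∈ univ.filter (fun j => (i, j) ∈ E), fm' j i dm) + r i dm)
    (hfp'c : ∀ dm ∈ Tsk, ∀ i : V, i ≠ dm.1 →
      (∑ j ∈ univ.filter (fun j => (i, j) ∈ E), fp' i j dm)
        = (∑ j ∈ univ.filter (fun j => (i, j) ∈ E), fp' j i dm) + g' i dm)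
    (hfp'd : ∀ dm ∈ Tsk, ∀ j, fp' dm.1 j dm = 0)
    (G' : V → ℝ) (hG' : ∀ i, G' i = ∑ dm ∈ Tsk, w i dm.2 * g' i dm)
    :
    (∑ i, C' i (G i) * G' i)
      + (∑ e ∈ E, D' e.1 e.2 (F e.1 e.2) * (∑ dm ∈ Tsk, Lm dm.2 * fm' e.1 e.2 dm))
      ≥ (∑ i, ∑ dm ∈ Tsk, ρ i dm * r i dm) - ∑ i, ∑ dm ∈ Tsk, g' i dm * σ i dm := by
  classical
  -- convert sums over E to double sums with indicators
  have hsumE : ∀ X : V → V → ℝ,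
      ∑ e ∈ E, X e.1 e.2 = ∑ i, ∑ j, if (i, j) ∈ E then X i j else 0 := by
    intro X
    have h1 : ∑ e ∈ E, X e.1 e.2
        = ∑ p ∈ (univ : Finset (V × V)), if p ∈ E then X p.1 p.2 else 0 := by
      rw [Finset.sum_ite_mem, Finset.univ_inter]
    rw [h1, ← Finset.univ_product_univ, Finset.sum_product]
  -- per-task key inequality
  have key : ∀ dm ∈ Tsk,
      ∑ i, ρ i dm * r i dm
        ≤ (∑ i, (w i dm.2 * C' i (G i) + σ i dm) * g' i dm)
          + ∑ i, ∑ j, (if (i, j) ∈ E then Lm dm.2 * D' i j (F i j) * fm' i j dm else 0) := by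
    intro dm hdm
    -- conservation rewritten
    have hr' : ∀ i : V, r i dm
        = (∑ j, if (i, j) ∈ E then fm' i j dm else 0) + g' i dm
          - (∑ j, if (i, j) ∈ E then fm' j i dm else 0) := by
      intro i
      have := hfm'c dm hdm i
      rw [Finset.sum_filter, Finset.sum_filter] at this
      linarith
    have expand : ∑ i, ρ i dm * r i dm
        = (∑ i, ∑ j, if (i, j) ∈ E then ρ i dm * fm' i j dm else 0)
          + (∑ i, ρ i dm * g' i dm)
          - (∑ i, ∑ j, if (i, j) ∈ E then ρ i dm * fm' j i dm else 0) := by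
      rw [← Finset.sum_add_distrib, ← Finset.sum_sub_distrib]
      refine Finset.sum_congr rfl fun i _ => ?_
      rw [hr' i]
      simp only [mul_sub, mul_add, Finset.mul_sum, mul_ite, mul_zero]
    -- swap lemma
    have swap : (∑ i, ∑ j, if (i, j) ∈ E then ρ i dm * fm' j i dm else 0)
        = ∑ i, ∑ j, if (i, j) ∈ E then ρ j dm * fm' i j dm else 0 := by
      rw [Finset.sum_comm]
      refine Finset.sum_congr rfl fun i _ => Finset.sum_congr rfl fun j _ => ?_
      by_cases h : (i, j) ∈ E
      · rw [if_pos h, if_pos (hEsymm i j h)]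
      · rw [if_neg h, if_neg (fun h' => h (hEsymm j i h'))]
    -- termwise bounds
    have bound1 : (∑ i, ∑ j, if (i, j) ∈ E then ρ i dm * fm' i j dm else 0)
        ≤ ∑ i, ∑ j, if (i, j) ∈ E
            then (Lm dm.2 * D' i j (F i j) + ρ j dm) * fm' i j dm else 0 := by
      refine Finset.sum_le_sum fun i _ => Finset.sum_le_sum fun j _ => ?_
      by_cases h : (i, j) ∈ E
      · rw [if_pos h, if_pos h]
        refine mul_le_mul_of_nonneg_right ?_ (hfm'0 i j dm)
        have := hδρ dm hdm i (some j)
          (Finset.mem_insert_of_mem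
            (Finset.mem_image_of_mem some (by simpa using h)))
        rwa [hδms] at this
      · rw [if_neg h, if_neg h]
    have bound2 : (∑ i, ρ i dm * g' i dm)
        ≤ ∑ i, (w i dm.2 * C' i (G i) + σ i dm) * g' i dm := by
      refine Finset.sum_le_sum fun i _ => ?_
      refine mul_le_mul_of_nonneg_right ?_ (hg'0 i dm)
      have := hδρ dm hdm i none (Finset.mem_insert_self _ _)
      rwa [hδmn] at this
    have split : (∑ i, ∑ j, if (i, j) ∈ E
            then (Lm dm.2 * D' i j (F i j) + ρ j dm) * fm' i j dm else 0)
        = (∑ i, ∑ j, if (i, j) ∈ E then Lm dm.2 * D' i j (F i j) * fm' i j dm else 0)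
          + ∑ i, ∑ j, if (i, j) ∈ E then ρ j dm * fm' i j dm else 0 := by
      rw [← Finset.sum_add_distrib]
      refine Finset.sum_congr rfl fun i _ => ?_
      rw [← Finset.sum_add_distrib]
      refine Finset.sum_congr rfl fun j _ => ?_
      split <;> ring
    rw [expand, swap]
    linarith [bound1, bound2]
  -- assemble
  rw [ge_iff_le, sub_le_iff_le_add]
  have lhs_eq : (∑ i, ∑ dm ∈ Tsk, ρ i dm * r i dm)
      = ∑ dm ∈ Tsk, ∑ i, ρ i dm * r i dm := Finset.sum_comm
  rw [lhs_eq]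
  have rhs_eq :
      ((∑ i, C' i (G i) * G' i)
        + (∑ e ∈ E, D' e.1 e.2 (F e.1 e.2) * (∑ dm ∈ Tsk, Lm dm.2 * fm' e.1 e.2 dm)))
        + (∑ i, ∑ dm ∈ Tsk, g' i dm * σ i dm)
      = ∑ dm ∈ Tsk,
          ((∑ i, (w i dm.2 * C' i (G i) + σ i dm) * g' i dm)
            + ∑ i, ∑ j, (if (i, j) ∈ E then Lm dm.2 * D' i j (F i j) * fm' i j dm else 0)) := by
    have e1 : (∑ i, C' i (G i) * G' i) + (∑ i, ∑ dm ∈ Tsk, g' i dm * σ i dm)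
        = ∑ dm ∈ Tsk, ∑ i, (w i dm.2 * C' i (G i) + σ i dm) * g' i dm := by
      rw [Finset.sum_comm (s := Tsk) (t := univ), ← Finset.sum_add_distrib]
      refine Finset.sum_congr rfl fun i _ => ?_
      rw [hG' i, Finset.mul_sum, ← Finset.sum_add_distrib]
      exact Finset.sum_congr rfl fun dm _ => by ring
    have e2 : (∑ e ∈ E, D' e.1 e.2 (F e.1 e.2) * (∑ dm ∈ Tsk, Lm dm.2 * fm' e.1 e.2 dm))
        = ∑ dm ∈ Tsk, ∑ i, ∑ j,
            (if (i, j) ∈ E then Lm dm.2 * D' i j (F i j) * fm' i j dm else 0) := by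
      rw [hsumE (fun i j => D' i j (F i j) * (∑ dm ∈ Tsk, Lm dm.2 * fm' i j dm))]
      have h : ∀ i j : V,
          (if (i, j) ∈ E then D' i j (F i j) * (∑ dm ∈ Tsk, Lm dm.2 * fm' i j dm) else 0)
          = ∑ dm ∈ Tsk, (if (i, j) ∈ E then Lm dm.2 * D' i j (F i j) * fm' i j dm else 0) := by
        intro i j
        split
        · rw [Finset.mul_sum]; exact Finset.sum_congr rfl fun dm _ => by ring
        · simp
      simp_rw [h]
      trans (∑ i : V, ∑ dm ∈ Tsk, ∑ j : V,
          if (i, j) ∈ E then Lm dm.2 * D' i j (F i j) * fm' i j dm else 0)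
      · exact Finset.sum_congr rfl fun i _ => Finset.sum_comm
      · exact Finset.sum_comm
    calc ((∑ i, C' i (G i) * G' i)
        + (∑ e ∈ E, D' e.1 e.2 (F e.1 e.2) * (∑ dm ∈ Tsk, Lm dm.2 * fm' e.1 e.2 dm)))
        + (∑ i, ∑ dm ∈ Tsk, g' i dm * σ i dm)
        = ((∑ i, C' i (G i) * G' i) + (∑ i, ∑ dm ∈ Tsk, g' i dm * σ i dm))
          + (∑ e ∈ E, D' e.1 e.2 (F e.1 e.2) * (∑ dm ∈ Tsk, Lm dm.2 * fm' e.1 e.2 dm)) := by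
          ring
      _ = (∑ dm ∈ Tsk, ∑ i, (w i dm.2 * C' i (G i) + σ i dm) * g' i dm)
          + ∑ dm ∈ Tsk, ∑ i, ∑ j,
              (if (i, j) ∈ E then Lm dm.2 * D' i j (F i j) * fm' i j dm else 0) := by
          rw [e1, e2]
      _ = _ := (Finset.sum_add_distrib).symm
  calc ∑ dm ∈ Tsk, ∑ i, ρ i dm * r i dm
      ≤ ∑ dm ∈ Tsk,
          ((∑ i, (w i dm.2 * C' i (G i) + σ i dm) * g' i dm)
            + ∑ i, ∑ j, (if (i, j) ∈ E then Lm dm.2 * D' i j (F i j) * fm' i j dm else 0)) :=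
        Finset.sum_le_sum key
    _ = _ := rhs_eq.symm
end

section
/- Suppose φ is a feasible forwarding strategy with nonnegative traffic vectors t⁻, t⁺ solving the traffic equations and marginal vectors ρ, σ solving the marginal recursions (σ_d(d,m) = 0), and suppose that δ⁺_{ij}(d,m) ≥ σ_i(d,m) for every task (d,m), every node i ≠ d and every j ∈ N_i. Then for every flow-feasible competitor (f⁻*, f⁺*, g*): Σ_{(i,j)∈E} D'_{ij}(F_{ij})·F⁺*_{ij} ≥ Σ_{i∈V} Σ_{(d,m)∈T} g*_i(d,m)·σ_i(d,m), where F⁺*_{ij} = Σ_{(d,m)∈T} L⁺_m f⁺*_{ij}(d,m). -/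
open Finset

/-- Result-flow inequality: if every marginal link cost `δ⁺_{ij}(d,m)` dominates `σ_i(d,m)`
(for `i ≠ d`), then for any flow-feasible competitor,
`Σ_{(i,j)∈E} D'_{ij}(F_{ij})·F⁺*_{ij} ≥ Σ_{i,(d,m)} g*_i(d,m)·σ_i(d,m)`. -/
theorem stmt_6
    {V M : Type*} [Fintype V] [DecidableEq V] [Fintype M] [DecidableEq M]
    -- network
    (E : Finset (V × V))
    (hEsymm : ∀ i j : V, (i, j) ∈ E → (j, i) ∈ E)
    (hEirrefl : ∀ i : V, (i, i) ∉ E)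
    (Tsk : Finset (V × M))
    (Lm Lp : M → ℝ) (hLm : ∀ m, 0 < Lm m) (hLp : ∀ m, 0 < Lp m)
    (w : V → M → ℝ) (hw : ∀ i m, 0 < w i m)
    (r : V → V × M → ℝ) (hr : ∀ i dm, 0 ≤ r i dm)
    -- feasible forwarding strategy
    (φm : V → Option V → V × M → ℝ) (φp : V → V → V × M → ℝ)
    (hφm0 : ∀ i j dm, 0 ≤ φm i j dm) (hφm1 : ∀ i j dm, φm i j dm ≤ 1)
    (hφp0 : ∀ i j dm, 0 ≤ φp i j dm) (hφp1 : ∀ i j dm, φp i j dm ≤ 1)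
    (hφmE : ∀ i j dm, (i, j) ∉ E → φm i (some j) dm = 0)
    (hφpE : ∀ i j dm, (i, j) ∉ E → φp i j dm = 0)
    (hφmsum : ∀ dm ∈ Tsk, ∀ i : V, φm i none dm + ∑ j, φm i (some j) dm = 1)
    (hφpsum : ∀ dm ∈ Tsk, ∀ i : V, i ≠ dm.1 → ∑ j, φp i j dm = 1)
    (hφpdest : ∀ dm ∈ Tsk, ∀ j, φp dm.1 j dm = 0)
    -- traffic vectors
    (tm tp : V → V × M → ℝ)
    (htm0 : ∀ i dm, 0 ≤ tm i dm) (htp0 : ∀ i dm, 0 ≤ tp i dm)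
    (g : V → V × M → ℝ) (hg : ∀ i dm, g i dm = tm i dm * φm i none dm)
    (htm : ∀ dm ∈ Tsk, ∀ i : V, tm i dm = r i dm + ∑ j, tm j dm * φm j (some i) dm)
    (htp : ∀ dm ∈ Tsk, ∀ i : V, tp i dm = g i dm + ∑ j, tp j dm * φp j i dm)
    -- link flows and workloads
    (F : V → V → ℝ)
    (hF : ∀ i j, F i j = ∑ dm ∈ Tsk,
      (Lm dm.2 * (tm i dm * φm i (some j) dm) + Lp dm.2 * (tp i dm * φp i j dm)))
    (G : V → ℝ) (hG : ∀ i, G i = ∑ dm ∈ Tsk, w i dm.2 * g i dm)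
    -- costs
    (D D' : V → V → ℝ → ℝ) (C C' : V → ℝ → ℝ)
    (hDmono : ∀ i j, Monotone (D i j))
    (hDconv : ∀ i j, ConvexOn ℝ Set.univ (D i j))
    (hDderiv : ∀ i j x, HasDerivAt (D i j) (D' i j x) x)
    (hCmono : ∀ i, Monotone (C i))
    (hCconv : ∀ i, ConvexOn ℝ Set.univ (C i))
    (hCderiv : ∀ i x, HasDerivAt (C i) (C' i x) x)
    -- marginal vectors
    (σ ρ : V → V × M → ℝ)
    (hσd : ∀ dm ∈ Tsk, σ dm.1 dm = 0)
    (hσ : ∀ dm ∈ Tsk, ∀ i : V, i ≠ dm.1 →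
      σ i dm = ∑ j ∈ univ.filter (fun j => (i, j) ∈ E),
        φp i j dm * (Lp dm.2 * D' i j (F i j) + σ j dm))
    (hρ : ∀ dm ∈ Tsk, ∀ i : V,
      ρ i dm = (∑ j ∈ univ.filter (fun j => (i, j) ∈ E),
          φm i (some j) dm * (Lm dm.2 * D' i j (F i j) + ρ j dm))
        + φm i none dm * (w i dm.2 * C' i (G i) + σ i dm))

    -- marginal link costs (result side)
    (δp : V → V → V × M → ℝ)
    (hδp : ∀ i j dm, δp i j dm = Lp dm.2 * D' i j (F i j) + σ j dm)
    -- hypothesis: δ⁺ dominates σ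
    (hδσ : ∀ dm ∈ Tsk, ∀ i : V, i ≠ dm.1 → ∀ j : V, (i, j) ∈ E → σ i dm ≤ δp i j dm)
    -- flow-feasible competitor
    (fm' fp' : V → V → V × M → ℝ) (g' : V → V × M → ℝ)
    (hfm'0 : ∀ i j dm, 0 ≤ fm' i j dm) (hfp'0 : ∀ i j dm, 0 ≤ fp' i j dm)
    (hg'0 : ∀ i dm, 0 ≤ g' i dm)
    (hfm'E : ∀ i j dm, (i, j) ∉ E → fm' i j dm = 0)
    (hfp'E : ∀ i j dm, (i, j) ∉ E → fp' i j dm = 0)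
    (hfm'c : ∀ dm ∈ Tsk, ∀ i : V,
      (∑ j ∈ univ.filter (fun j => (i, j) ∈ E), fm' i j dm) + g' i dm
        = (∑ j ∈ univ.filter (fun j => (i, j) ∈ E), fm' j i dm) + r i dm)
    (hfp'c : ∀ dm ∈ Tsk, ∀ i : V, i ≠ dm.1 →
      (∑ j ∈ univ.filter (fun j => (i, j) ∈ E), fp' i j dm)
        = (∑ j ∈ univ.filter (fun j => (i, j) ∈ E), fp' j i dm) + g' i dm)
    (hfp'd : ∀ dm ∈ Tsk, ∀ j, fp' dm.1 j dm = 0)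
    :
    (∑ e ∈ E, D' e.1 e.2 (F e.1 e.2) * (∑ dm ∈ Tsk, Lp dm.2 * fp' e.1 e.2 dm))
      ≥ ∑ i, ∑ dm ∈ Tsk, g' i dm * σ i dm := by
  have sumE : ∀ (h : V × V → ℝ), (∀ i j, (i, j) ∉ E → h (i, j) = 0) →
      ∑ e ∈ E, h e = ∑ i, ∑ j, h (i, j) := by
    intro h hh
    rw [← Finset.sum_product]
    apply Finset.sum_subset (by simp)
    intro x _ hx
    have := hh x.1 x.2 hx
    simpa using this
  have key : ∀ dm ∈ Tsk,
      (∑ i, g' i dm * σ i dm)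
        ≤ ∑ e ∈ E, Lp dm.2 * D' e.1 e.2 (F e.1 e.2) * fp' e.1 e.2 dm := by
    intro dm hdm
    have fltOut : ∀ i : V, ∑ j ∈ univ.filter (fun j => (i, j) ∈ E), fp' i j dm
        = ∑ j, fp' i j dm := by
      intro i
      apply Finset.sum_filter_of_ne
      intro j _ hj
      by_contra hE
      exact hj (hfp'E i j dm hE)
    have fltIn : ∀ i : V, ∑ j ∈ univ.filter (fun j => (i, j) ∈ E), fp' j i dm
        = ∑ j, fp' j i dm := by
      intro i
      apply Finset.sum_filter_of_ne
      intro j _ hj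
      by_contra hE
      have : (j, i) ∉ E := fun hc => hE (hEsymm j i hc)
      exact hj (hfp'E j i dm this)
    have step2 : ∑ e ∈ E, (σ e.1 dm - σ e.2 dm) * fp' e.1 e.2 dm
        = ∑ i, g' i dm * σ i dm := by
      have h2 := sumE (fun e => (σ e.1 dm - σ e.2 dm) * fp' e.1 e.2 dm)
        (fun i j hij => by simp [hfp'E i j dm hij])
      rw [h2]
      dsimp only
      have expand : ∀ i : V, ∑ j, (σ i dm - σ j dm) * fp' i j dm
          = (∑ j, σ i dm * fp' i j dm) - ∑ j, σ j dm * fp' i j dm := by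
        intro i
        rw [← Finset.sum_sub_distrib]
        exact Finset.sum_congr rfl fun j _ => by ring
      simp only [expand]
      rw [Finset.sum_sub_distrib]
      have swap : ∑ i, ∑ j, σ j dm * fp' i j dm = ∑ i, ∑ j, σ i dm * fp' j i dm := by
        rw [Finset.sum_comm]
      rw [swap, ← Finset.sum_sub_distrib]
      apply Finset.sum_congr rfl
      intro i _
      by_cases hi : i = dm.1
      · subst hi
        have hσ0 := hσd dm hdm
        simp [hσ0, hfp'd dm hdm]
      · have hc := hfp'c dm hdm i hi
        have : (∑ j, σ i dm * fp' i j dm) - ∑ j, σ i dm * fp' j i dm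
            = σ i dm * ((∑ j, fp' i j dm) - ∑ j, fp' j i dm) := by
          rw [← Finset.mul_sum, ← Finset.mul_sum, mul_sub]
        rw [this, ← fltOut, ← fltIn, hc]
        ring
    have step1 : ∑ e ∈ E, (σ e.1 dm - σ e.2 dm) * fp' e.1 e.2 dm
        ≤ ∑ e ∈ E, Lp dm.2 * D' e.1 e.2 (F e.1 e.2) * fp' e.1 e.2 dm := by
      apply Finset.sum_le_sum
      intro e he
      by_cases hi : e.1 = dm.1
      · rw [hi, hfp'd dm hdm]
        simp
      · have h1 := hδσ dm hdm e.1 hi e.2 he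
        rw [hδp] at h1
        have h2 := hfp'0 e.1 e.2 dm
        nlinarith
    linarith [step2, step1]
  calc ∑ e ∈ E, D' e.1 e.2 (F e.1 e.2) * (∑ dm ∈ Tsk, Lp dm.2 * fp' e.1 e.2 dm)
      = ∑ dm ∈ Tsk, ∑ e ∈ E, Lp dm.2 * D' e.1 e.2 (F e.1 e.2) * fp' e.1 e.2 dm := by
        rw [Finset.sum_comm]
        apply Finset.sum_congr rfl
        intro e _
        rw [Finset.mul_sum]
        exact Finset.sum_congr rfl fun dm _ => by ring
    _ ≥ ∑ dm ∈ Tsk, ∑ i, g' i dm * σ i dm :=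
        Finset.sum_le_sum fun dm hdm => key dm hdm
    _ = ∑ i, ∑ dm ∈ Tsk, g' i dm * σ i dm := Finset.sum_comm
end

section
/- Suppose φ is a feasible forwarding strategy, t⁻, t⁺ are nonnegative traffic vectors solving the traffic equations with t⁻_i(d,m) > 0 and t⁺_i(d,m) > 0 for every node i and task (d,m), and ρ, σ are marginal vectors solving the marginal recursions. Suppose φ satisfies the first-order KKT conditions of Lemma 1, namely: for every i, (d,m) and j ∈ {0} ∪ N_i, φ⁻_{ij}(d,m) > 0 implies t⁻_i(d,m)·δ⁻_{ij}(d,m) = min_{k ∈ {0}∪N_i} t⁻_i(d,m)·δ⁻_{ik}(d,m), and for every i ≠ d and j ∈ N_i, φ⁺_{ij}(d,m) > 0 implies t⁺_i(d,m)·δ⁺_{ij}(d,m) = min_{k∈N_i} t⁺_i(d,m)·δ⁺_{ik}(d,m). Then φ is a global optimum: for every flow-feasible competitor (f⁻*, f⁺*, g*) with link flows F* and workloads G*, Σ_{(i,j)∈E} D_{ij}(F_{ij}) + Σ_{i∈V} C_i(G_i) ≤ Σ_{(i,j)∈E} D_{ij}(F*_{ij}) + Σ_{i∈V} C_i(G*_i).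 -/
open Finset

private lemma tangent_le {f : ℝ → ℝ} {f' x y : ℝ} (hc : ConvexOn ℝ Set.univ f)
    (hd : HasDerivAt f f' x) : f x + f' * (y - x) ≤ f y := by
  rcases lt_trichotomy x y with h | rfl | h
  · have hs := hc.le_slope_of_hasDerivAt (Set.mem_univ x) (Set.mem_univ y) h hd
    rw [slope_def_field] at hs
    have hpos : 0 < y - x := by linarith
    have := (le_div_iff₀ hpos).mp hs
    linarith
  · simp
  · have hs := hc.slope_le_of_hasDerivAt (Set.mem_univ y) (Set.mem_univ x) h hd
    rw [slope_def_field] at hs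
    have hpos : 0 < x - y := by linarith
    have h2 := (div_le_iff₀ hpos).mp hs
    have hr : f' * (y - x) = -(f' * (x - y)) := by ring
    linarith

private lemma sum_edge_eq {V : Type*} [Fintype V] [DecidableEq V] (E : Finset (V × V))
    (f : V → V → ℝ) (hf : ∀ i j, (i, j) ∉ E → f i j = 0) :
    ∑ e ∈ E, f e.1 e.2 = ∑ i, ∑ j, f i j := by
  rw [← Finset.sum_product']
  exact Finset.sum_subset (fun x _ => Finset.mem_product.mpr ⟨mem_univ _, mem_univ _⟩)
    (fun x _ hx => hf x.1 x.2 hx)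

private lemma sum_mul_sub {V : Type*} [Fintype V] (c : V → V → ℝ) (p : V → ℝ) :
    ∑ i, ∑ j, c i j * (p i - p j) = ∑ i, p i * ((∑ j, c i j) - ∑ j, c j i) := by
  have h1 : ∑ i, ∑ j, c i j * p j = ∑ i, p i * ∑ j, c j i := by
    rw [Finset.sum_comm]
    refine Finset.sum_congr rfl fun j _ => ?_
    rw [Finset.mul_sum]
    exact Finset.sum_congr rfl fun i _ => mul_comm _ _
  have h2 : ∑ i, ∑ j, c i j * p i = ∑ i, p i * ∑ j, c i j := by
    refine Finset.sum_congr rfl fun i _ => ?_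
    rw [Finset.mul_sum]
    exact Finset.sum_congr rfl fun j _ => mul_comm _ _
  simp_rw [mul_sub, Finset.sum_sub_distrib]
  rw [h1, h2]

private lemma key_identity {V : Type*} [Fintype V] [DecidableEq V] (E : Finset (V × V))
    (a b : V → V → ℝ) (h rr ρ σ : V → ℝ) (d : V)
    (ha0 : ∀ i j, (i, j) ∉ E → a i j = 0) (hb0 : ∀ i j, (i, j) ∉ E → b i j = 0)
    (hacons : ∀ i, (∑ j, a i j) + h i = (∑ j, a j i) + rr i)
    (hbcons : ∀ i, i ≠ d → (∑ j, b i j) = (∑ j, b j i) + h i)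
    (hbd : ∀ j, b d j = 0) (hsd : σ d = 0) :
    (∑ e ∈ E, (a e.1 e.2 * (ρ e.1 - ρ e.2) + b e.1 e.2 * (σ e.1 - σ e.2)))
      + ∑ i, h i * (ρ i - σ i) = ∑ i, rr i * ρ i := by
  have hA : ∑ e ∈ E, a e.1 e.2 * (ρ e.1 - ρ e.2) = ∑ i, ρ i * ((∑ j, a i j) - ∑ j, a j i) := by
    exact (sum_edge_eq E (fun i j => a i j * (ρ i - ρ j))
      (fun i j hij => by simp [ha0 i j hij])).trans (sum_mul_sub a ρ)
  have hB : ∑ e ∈ E, b e.1 e.2 * (σ e.1 - σ e.2) = ∑ i, σ i * ((∑ j, b i j) - ∑ j, b j i) := by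
    exact (sum_edge_eq E (fun i j => b i j * (σ i - σ j))
      (fun i j hij => by simp [hb0 i j hij])).trans (sum_mul_sub b σ)
  rw [Finset.sum_add_distrib, hA, hB]
  have hzero : ∑ i, σ i * ((∑ j, b i j) - (∑ j, b j i) - h i) = 0 := by
    refine Finset.sum_eq_zero fun i _ => ?_
    by_cases hid : i = d
    · rw [hid, hsd, zero_mul]
    · rw [hbcons i hid]; ring
  have hmain : (∑ i, ρ i * ((∑ j, a i j) - ∑ j, a j i))
      + (∑ i, σ i * ((∑ j, b i j) - ∑ j, b j i)) + ∑ i, h i * (ρ i - σ i)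
      = ∑ i, (rr i * ρ i + σ i * ((∑ j, b i j) - (∑ j, b j i) - h i)) := by
    rw [← Finset.sum_add_distrib, ← Finset.sum_add_distrib]
    refine Finset.sum_congr rfl fun i _ => ?_
    have hc := hacons i
    have hkey : (∑ j, a i j) - ∑ j, a j i = rr i - h i := by linarith
    rw [hkey]; ring
  rw [hmain, Finset.sum_add_distrib, hzero, add_zero]

/-- Proposition 3: if all traffic is strictly positive and the first-order KKT conditions of
Lemma 1 hold (with marginals weighted by the traffic), then the strategy is a global optimum of
the joint forwarding and computation offloading problem. -/
theorem stmt_7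
    {V M : Type*} [Fintype V] [DecidableEq V] [Fintype M] [DecidableEq M]
    -- network
    (E : Finset (V × V))
    (hEsymm : ∀ i j : V, (i, j) ∈ E → (j, i) ∈ E)
    (hEirrefl : ∀ i : V, (i, i) ∉ E)
    (Tsk : Finset (V × M))
    (Lm Lp : M → ℝ) (hLm : ∀ m, 0 < Lm m) (hLp : ∀ m, 0 < Lp m)
    (w : V → M → ℝ) (hw : ∀ i m, 0 < w i m)
    (r : V → V × M → ℝ) (hr : ∀ i dm, 0 ≤ r i dm)
    -- feasible forwarding strategy
    (φm : V → Option V → V × M → ℝ) (φp : V → V → V × M → ℝ)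
    (hφm0 : ∀ i j dm, 0 ≤ φm i j dm) (hφm1 : ∀ i j dm, φm i j dm ≤ 1)
    (hφp0 : ∀ i j dm, 0 ≤ φp i j dm) (hφp1 : ∀ i j dm, φp i j dm ≤ 1)
    (hφmE : ∀ i j dm, (i, j) ∉ E → φm i (some j) dm = 0)
    (hφpE : ∀ i j dm, (i, j) ∉ E → φp i j dm = 0)
    (hφmsum : ∀ dm ∈ Tsk, ∀ i : V, φm i none dm + ∑ j, φm i (some j) dm = 1)
    (hφpsum : ∀ dm ∈ Tsk, ∀ i : V, i ≠ dm.1 → ∑ j, φp i j dm = 1)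
    (hφpdest : ∀ dm ∈ Tsk, ∀ j, φp dm.1 j dm = 0)
    -- traffic vectors
    (tm tp : V → V × M → ℝ)
    (htm0 : ∀ i dm, 0 ≤ tm i dm) (htp0 : ∀ i dm, 0 ≤ tp i dm)
    (g : V → V × M → ℝ) (hg : ∀ i dm, g i dm = tm i dm * φm i none dm)
    (htm : ∀ dm ∈ Tsk, ∀ i : V, tm i dm = r i dm + ∑ j, tm j dm * φm j (some i) dm)
    (htp : ∀ dm ∈ Tsk, ∀ i : V, tp i dm = g i dm + ∑ j, tp j dm * φp j i dm)
    -- link flows and workloads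
    (F : V → V → ℝ)
    (hF : ∀ i j, F i j = ∑ dm ∈ Tsk,
      (Lm dm.2 * (tm i dm * φm i (some j) dm) + Lp dm.2 * (tp i dm * φp i j dm)))
    (G : V → ℝ) (hG : ∀ i, G i = ∑ dm ∈ Tsk, w i dm.2 * g i dm)
    -- costs
    (D D' : V → V → ℝ → ℝ) (C C' : V → ℝ → ℝ)
    (hDmono : ∀ i j, Monotone (D i j))
    (hDconv : ∀ i j, ConvexOn ℝ Set.univ (D i j))
    (hDderiv : ∀ i j x, HasDerivAt (D i j) (D' i j x) x)
    (hCmono : ∀ i, Monotone (C i))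
    (hCconv : ∀ i, ConvexOn ℝ Set.univ (C i))
    (hCderiv : ∀ i x, HasDerivAt (C i) (C' i x) x)
    -- marginal vectors
    (σ ρ : V → V × M → ℝ)
    (hσd : ∀ dm ∈ Tsk, σ dm.1 dm = 0)
    (hσ : ∀ dm ∈ Tsk, ∀ i : V, i ≠ dm.1 →
      σ i dm = ∑ j ∈ univ.filter (fun j => (i, j) ∈ E),
        φp i j dm * (Lp dm.2 * D' i j (F i j) + σ j dm))
    (hρ : ∀ dm ∈ Tsk, ∀ i : V,
      ρ i dm = (∑ j ∈ univ.filter (fun j => (i, j) ∈ E),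
          φm i (some j) dm * (Lm dm.2 * D' i j (F i j) + ρ j dm))
        + φm i none dm * (w i dm.2 * C' i (G i) + σ i dm))

    -- marginal link/CPU costs
    (δm : V → Option V → V × M → ℝ) (δp : V → V → V × M → ℝ)
    (hδms : ∀ i j dm, δm i (some j) dm = Lm dm.2 * D' i j (F i j) + ρ j dm)
    (hδmn : ∀ i dm, δm i none dm = w i dm.2 * C' i (G i) + σ i dm)
    (hδp : ∀ i j dm, δp i j dm = Lp dm.2 * D' i j (F i j) + σ j dm)
    -- strictly positive traffic
    (htmpos : ∀ dm ∈ Tsk, ∀ i : V, 0 < tm i dm)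
    (htppos : ∀ dm ∈ Tsk, ∀ i : V, 0 < tp i dm)
    -- first-order KKT conditions of Lemma 1
    (hkktm : ∀ dm ∈ Tsk, ∀ i : V,
      ∀ j ∈ insert (none : Option V) ((univ.filter (fun j => (i, j) ∈ E)).image some),
        0 < φm i j dm →
        ∀ k ∈ insert (none : Option V) ((univ.filter (fun j => (i, j) ∈ E)).image some),
          tm i dm * δm i j dm ≤ tm i dm * δm i k dm)
    (hkktp : ∀ dm ∈ Tsk, ∀ i : V, i ≠ dm.1 →
      ∀ j : V, (i, j) ∈ E → 0 < φp i j dm →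
        ∀ k : V, (i, k) ∈ E → tp i dm * δp i j dm ≤ tp i dm * δp i k dm)
    -- flow-feasible competitor
    (fm' fp' : V → V → V × M → ℝ) (g' : V → V × M → ℝ)
    (hfm'0 : ∀ i j dm, 0 ≤ fm' i j dm) (hfp'0 : ∀ i j dm, 0 ≤ fp' i j dm)
    (hg'0 : ∀ i dm, 0 ≤ g' i dm)
    (hfm'E : ∀ i j dm, (i, j) ∉ E → fm' i j dm = 0)
    (hfp'E : ∀ i j dm, (i, j) ∉ E → fp' i j dm = 0)
    (hfm'c : ∀ dm ∈ Tsk, ∀ i : V,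
      (∑ j ∈ univ.filter (fun j => (i, j) ∈ E), fm' i j dm) + g' i dm
        = (∑ j ∈ univ.filter (fun j => (i, j) ∈ E), fm' j i dm) + r i dm)
    (hfp'c : ∀ dm ∈ Tsk, ∀ i : V, i ≠ dm.1 →
      (∑ j ∈ univ.filter (fun j => (i, j) ∈ E), fp' i j dm)
        = (∑ j ∈ univ.filter (fun j => (i, j) ∈ E), fp' j i dm) + g' i dm)
    (hfp'd : ∀ dm ∈ Tsk, ∀ j, fp' dm.1 j dm = 0)
    (F' : V → V → ℝ)
    (hF' : ∀ i j, F' i j = ∑ dm ∈ Tsk, (Lm dm.2 * fm' i j dm + Lp dm.2 * fp' i j dm))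
    (G' : V → ℝ) (hG' : ∀ i, G' i = ∑ dm ∈ Tsk, w i dm.2 * g' i dm)
    :
    (∑ e ∈ E, D e.1 e.2 (F e.1 e.2)) + ∑ i, C i (G i)
      ≤ (∑ e ∈ E, D e.1 e.2 (F' e.1 e.2)) + ∑ i, C i (G' i) := by
  
  classical
  -- Step 1: per-task linearized inequality
  have key : ∀ dm ∈ Tsk,
      (∑ e ∈ E, D' e.1 e.2 (F e.1 e.2) *
          (Lm dm.2 * (tm e.1 dm * φm e.1 (some e.2) dm) + Lp dm.2 * (tp e.1 dm * φp e.1 e.2 dm)))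
        + ∑ i, C' i (G i) * (w i dm.2 * g i dm)
      ≤ (∑ e ∈ E, D' e.1 e.2 (F e.1 e.2) *
          (Lm dm.2 * fm' e.1 e.2 dm + Lp dm.2 * fp' e.1 e.2 dm))
        + ∑ i, C' i (G i) * (w i dm.2 * g' i dm) := by
    intro dm hdm
    have hmemE : ∀ i j : V, (i, j) ∈ E →
        (some j) ∈ insert (none : Option V) ((univ.filter (fun l => (i, l) ∈ E)).image some) :=
      fun i j hij => Finset.mem_insert_of_mem
        (Finset.mem_image_of_mem _ (Finset.mem_filter.mpr ⟨Finset.mem_univ _, hij⟩))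
    have hinj : ∀ i : V, ∀ x ∈ univ.filter (fun l => (i, l) ∈ E),
        ∀ y ∈ univ.filter (fun l => (i, l) ∈ E), (some x : Option V) = some y → x = y :=
      fun _ x _ y _ hxy => Option.some_injective V hxy
    have hρexp : ∀ i : V, ρ i dm =
        ∑ l ∈ insert (none : Option V) ((univ.filter (fun l => (i, l) ∈ E)).image some),
          φm i l dm * δm i l dm := by
      intro i
      rw [Finset.sum_insert (by simp), Finset.sum_image (hinj i), hδmn, hρ dm hdm i]
      simp_rw [hδms]
      ring
    have hρsum : ∀ i : V,
        ∑ l ∈ insert (none : Option V) ((univ.filter (fun l => (i, l) ∈ E)).image some),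
          φm i l dm = 1 := by
      intro i
      rw [Finset.sum_insert (by simp), Finset.sum_image (hinj i),
        Finset.sum_filter_of_ne (fun j _ hne => by
          by_contra hmem; exact hne (hφmE i j dm hmem))]
      exact hφmsum dm hdm i
    have hρle : ∀ i : V,
        ∀ k ∈ insert (none : Option V) ((univ.filter (fun l => (i, l) ∈ E)).image some),
          ρ i dm ≤ δm i k dm := by
      intro i k hk
      calc ρ i dm
          = ∑ l ∈ insert (none : Option V) ((univ.filter (fun l => (i, l) ∈ E)).image some),
              φm i l dm * δm i l dm := hρexp i
        _ ≤ ∑ l ∈ insert (none : Option V) ((univ.filter (fun l => (i, l) ∈ E)).image some),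
              φm i l dm * δm i k dm := by
            refine Finset.sum_le_sum fun l hl => ?_
            rcases (hφm0 i l dm).eq_or_lt with hz | hpos
            · rw [← hz, zero_mul, zero_mul]
            · exact mul_le_mul_of_nonneg_left
                (le_of_mul_le_mul_left (hkktm dm hdm i l hl hpos k hk) (htmpos dm hdm i))
                (hφm0 i l dm)
        _ = δm i k dm := by rw [← Finset.sum_mul, hρsum i, one_mul]
    have hρge : ∀ i : V,
        ∀ k ∈ insert (none : Option V) ((univ.filter (fun l => (i, l) ∈ E)).image some),
          0 < φm i k dm → δm i k dm ≤ ρ i dm := by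
      intro i k hk hkpos
      calc δm i k dm
          = ∑ l ∈ insert (none : Option V) ((univ.filter (fun l => (i, l) ∈ E)).image some),
              φm i l dm * δm i k dm := by rw [← Finset.sum_mul, hρsum i, one_mul]
        _ ≤ ∑ l ∈ insert (none : Option V) ((univ.filter (fun l => (i, l) ∈ E)).image some),
              φm i l dm * δm i l dm := by
            refine Finset.sum_le_sum fun l hl => ?_
            exact mul_le_mul_of_nonneg_left
              (le_of_mul_le_mul_left (hkktm dm hdm i k hk hkpos l hl) (htmpos dm hdm i))
              (hφm0 i l dm)
        _ = ρ i dm := (hρexp i).symm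
    have hσexp : ∀ i : V, i ≠ dm.1 → σ i dm =
        ∑ j ∈ univ.filter (fun l => (i, l) ∈ E), φp i j dm * δp i j dm := by
      intro i hi
      rw [hσ dm hdm i hi]
      exact Finset.sum_congr rfl fun j _ => by rw [hδp]
    have hσsum : ∀ i : V, i ≠ dm.1 →
        ∑ j ∈ univ.filter (fun l => (i, l) ∈ E), φp i j dm = 1 := by
      intro i hi
      rw [Finset.sum_filter_of_ne (fun j _ hne => by
        by_contra hmem; exact hne (hφpE i j dm hmem))]
      exact hφpsum dm hdm i hi
    have hσle : ∀ i : V, i ≠ dm.1 → ∀ k : V, (i, k) ∈ E → σ i dm ≤ δp i k dm := by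
      intro i hi k hk
      calc σ i dm = ∑ j ∈ univ.filter (fun l => (i, l) ∈ E), φp i j dm * δp i j dm := hσexp i hi
        _ ≤ ∑ j ∈ univ.filter (fun l => (i, l) ∈ E), φp i j dm * δp i k dm := by
            refine Finset.sum_le_sum fun l hl => ?_
            rcases (hφp0 i l dm).eq_or_lt with hz | hpos
            · rw [← hz, zero_mul, zero_mul]
            · exact mul_le_mul_of_nonneg_left
                (le_of_mul_le_mul_left
                  (hkktp dm hdm i hi l (Finset.mem_filter.mp hl).2 hpos k hk)
                  (htppos dm hdm i))
                (hφp0 i l dm)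
        _ = δp i k dm := by rw [← Finset.sum_mul, hσsum i hi, one_mul]
    have hσge : ∀ i : V, i ≠ dm.1 → ∀ k : V, (i, k) ∈ E → 0 < φp i k dm →
        δp i k dm ≤ σ i dm := by
      intro i hi k hk hkpos
      calc δp i k dm
          = ∑ j ∈ univ.filter (fun l => (i, l) ∈ E), φp i j dm * δp i k dm := by
            rw [← Finset.sum_mul, hσsum i hi, one_mul]
        _ ≤ ∑ j ∈ univ.filter (fun l => (i, l) ∈ E), φp i j dm * δp i j dm := by
            refine Finset.sum_le_sum fun l hl => ?_
            exact mul_le_mul_of_nonneg_left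
              (le_of_mul_le_mul_left
                (hkktp dm hdm i hi k hk hkpos l (Finset.mem_filter.mp hl).2)
                (htppos dm hdm i))
              (hφp0 i l dm)
        _ = σ i dm := (hσexp i hi).symm
    -- identity for the actual flows
    have pa0 : ∀ i j : V, (i, j) ∉ E → tm i dm * φm i (some j) dm = 0 :=
      fun i j hij => by rw [hφmE i j dm hij, mul_zero]
    have pb0 : ∀ i j : V, (i, j) ∉ E → tp i dm * φp i j dm = 0 :=
      fun i j hij => by rw [hφpE i j dm hij, mul_zero]
    have pacons : ∀ i : V, (∑ j, tm i dm * φm i (some j) dm) + g i dm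
        = (∑ j, tm j dm * φm j (some i) dm) + r i dm := by
      intro i
      rw [← Finset.mul_sum, hg]
      linear_combination tm i dm * hφmsum dm hdm i + htm dm hdm i
    have pbcons : ∀ i : V, i ≠ dm.1 → (∑ j, tp i dm * φp i j dm)
        = (∑ j, tp j dm * φp j i dm) + g i dm := by
      intro i hi
      rw [← Finset.mul_sum]
      linear_combination tp i dm * hφpsum dm hdm i hi + htp dm hdm i
    have pbd : ∀ j : V, tp dm.1 dm * φp dm.1 j dm = 0 :=
      fun j => by rw [hφpdest dm hdm j, mul_zero]
    have hid : (∑ e ∈ E, (tm e.1 dm * φm e.1 (some e.2) dm * (ρ e.1 dm - ρ e.2 dm)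
          + tp e.1 dm * φp e.1 e.2 dm * (σ e.1 dm - σ e.2 dm)))
        + ∑ i, g i dm * (ρ i dm - σ i dm) = ∑ i, r i dm * ρ i dm :=
      key_identity E (fun i j => tm i dm * φm i (some j) dm) (fun i j => tp i dm * φp i j dm)
        (fun i => g i dm) (fun i => r i dm) (fun i => ρ i dm) (fun i => σ i dm) dm.1
        pa0 pb0 pacons pbcons pbd (hσd dm hdm)
    -- identity for the competitor flows
    have qa0 : ∀ i j : V, (i, j) ∉ E → fm' i j dm = 0 := fun i j hij => hfm'E i j dm hij
    have qb0 : ∀ i j : V, (i, j) ∉ E → fp' i j dm = 0 := fun i j hij => hfp'E i j dm hij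
    have qacons : ∀ i : V, (∑ j, fm' i j dm) + g' i dm = (∑ j, fm' j i dm) + r i dm := by
      intro i
      have c1 : ∑ j ∈ univ.filter (fun l => (i, l) ∈ E), fm' i j dm = ∑ j, fm' i j dm :=
        Finset.sum_filter_of_ne (fun j _ hne => by
          by_contra hmem; exact hne (hfm'E i j dm hmem))
      have c2 : ∑ j ∈ univ.filter (fun l => (i, l) ∈ E), fm' j i dm = ∑ j, fm' j i dm :=
        Finset.sum_filter_of_ne (fun j _ hne => by
          by_contra hmem; exact hne (hfm'E j i dm (fun hji => hmem (hEsymm j i hji))))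
      rw [← c1, ← c2]
      exact hfm'c dm hdm i
    have qbcons : ∀ i : V, i ≠ dm.1 → (∑ j, fp' i j dm) = (∑ j, fp' j i dm) + g' i dm := by
      intro i hi
      have c1 : ∑ j ∈ univ.filter (fun l => (i, l) ∈ E), fp' i j dm = ∑ j, fp' i j dm :=
        Finset.sum_filter_of_ne (fun j _ hne => by
          by_contra hmem; exact hne (hfp'E i j dm hmem))
      have c2 : ∑ j ∈ univ.filter (fun l => (i, l) ∈ E), fp' j i dm = ∑ j, fp' j i dm :=
        Finset.sum_filter_of_ne (fun j _ hne => by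
          by_contra hmem; exact hne (hfp'E j i dm (fun hji => hmem (hEsymm j i hji))))
      rw [← c1, ← c2]
      exact hfp'c dm hdm i hi
    have hid' : (∑ e ∈ E, (fm' e.1 e.2 dm * (ρ e.1 dm - ρ e.2 dm)
          + fp' e.1 e.2 dm * (σ e.1 dm - σ e.2 dm)))
        + ∑ i, g' i dm * (ρ i dm - σ i dm) = ∑ i, r i dm * ρ i dm :=
      key_identity E (fun i j => fm' i j dm) (fun i j => fp' i j dm)
        (fun i => g' i dm) (fun i => r i dm) (fun i => ρ i dm) (fun i => σ i dm) dm.1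
        qa0 qb0 qacons qbcons (fun j => hfp'd dm hdm j) (hσd dm hdm)
    -- the actual cost equals the potential sum
    have hDeq : ∑ e ∈ E, D' e.1 e.2 (F e.1 e.2) *
          (Lm dm.2 * (tm e.1 dm * φm e.1 (some e.2) dm) + Lp dm.2 * (tp e.1 dm * φp e.1 e.2 dm))
        = ∑ e ∈ E, (tm e.1 dm * φm e.1 (some e.2) dm * (ρ e.1 dm - ρ e.2 dm)
          + tp e.1 dm * φp e.1 e.2 dm * (σ e.1 dm - σ e.2 dm)) := by
      refine Finset.sum_congr rfl fun e he => ?_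
      obtain ⟨i, j⟩ := e
      have h1 : tm i dm * φm i (some j) dm * (ρ i dm - ρ j dm)
          = Lm dm.2 * D' i j (F i j) * (tm i dm * φm i (some j) dm) := by
        rcases (hφm0 i (some j) dm).eq_or_lt with hz | hpos
        · rw [← hz]; ring
        · have heq := le_antisymm (hρle i _ (hmemE i j he)) (hρge i _ (hmemE i j he) hpos)
          rw [hδms] at heq
          linear_combination (tm i dm * φm i (some j) dm) * heq
      have h2 : tp i dm * φp i j dm * (σ i dm - σ j dm)
          = Lp dm.2 * D' i j (F i j) * (tp i dm * φp i j dm) := by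
        rcases (hφp0 i j dm).eq_or_lt with hz | hpos
        · rw [← hz]; ring
        · have hi : i ≠ dm.1 := by
            intro hidd
            rw [hidd, hφpdest dm hdm j] at hpos
            exact lt_irrefl _ hpos
          have heq := le_antisymm (hσle i hi j he) (hσge i hi j he hpos)
          rw [hδp] at heq
          linear_combination (tp i dm * φp i j dm) * heq
      linear_combination -h1 - h2
    have hCeq : ∑ i, C' i (G i) * (w i dm.2 * g i dm)
        = ∑ i, g i dm * (ρ i dm - σ i dm) := by
      refine Finset.sum_congr rfl fun i _ => ?_
      rcases (hφm0 i none dm).eq_or_lt with hz | hpos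
      · rw [hg, ← hz]; ring
      · have heq := le_antisymm (hρle i none (Finset.mem_insert_self _ _))
          (hρge i none (Finset.mem_insert_self _ _) hpos)
        rw [hδmn] at heq
        linear_combination (- g i dm) * heq
    -- the competitor cost dominates the potential sum
    have hDle : ∑ e ∈ E, (fm' e.1 e.2 dm * (ρ e.1 dm - ρ e.2 dm)
          + fp' e.1 e.2 dm * (σ e.1 dm - σ e.2 dm))
        ≤ ∑ e ∈ E, D' e.1 e.2 (F e.1 e.2) *
          (Lm dm.2 * fm' e.1 e.2 dm + Lp dm.2 * fp' e.1 e.2 dm) := by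
      refine Finset.sum_le_sum fun e he => ?_
      obtain ⟨i, j⟩ := e
      have A : fm' i j dm * (ρ i dm - ρ j dm)
          ≤ fm' i j dm * (Lm dm.2 * D' i j (F i j)) := by
        refine mul_le_mul_of_nonneg_left ?_ (hfm'0 i j dm)
        have := hρle i (some j) (hmemE i j he)
        rw [hδms] at this
        linarith
      have B : fp' i j dm * (σ i dm - σ j dm)
          ≤ fp' i j dm * (Lp dm.2 * D' i j (F i j)) := by
        by_cases hi : i = dm.1
        · rw [hi, hfp'd dm hdm j]
          simp
        · refine mul_le_mul_of_nonneg_left ?_ (hfp'0 i j dm)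
          have := hσle i hi j he
          rw [hδp] at this
          linarith
      have hring : D' i j (F i j) * (Lm dm.2 * fm' i j dm + Lp dm.2 * fp' i j dm)
          = fm' i j dm * (Lm dm.2 * D' i j (F i j)) + fp' i j dm * (Lp dm.2 * D' i j (F i j)) := by
        ring
      rw [hring]
      exact add_le_add A B
    have hCle : ∑ i, g' i dm * (ρ i dm - σ i dm)
        ≤ ∑ i, C' i (G i) * (w i dm.2 * g' i dm) := by
      refine Finset.sum_le_sum fun i _ => ?_
      have hb : ρ i dm - σ i dm ≤ w i dm.2 * C' i (G i) := by
        have := hρle i none (Finset.mem_insert_self _ _)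
        rw [hδmn] at this
        linarith
      have hring : C' i (G i) * (w i dm.2 * g' i dm)
          = g' i dm * (w i dm.2 * C' i (G i)) := by ring
      rw [hring]
      exact mul_le_mul_of_nonneg_left hb (hg'0 i dm)
    calc (∑ e ∈ E, D' e.1 e.2 (F e.1 e.2) *
          (Lm dm.2 * (tm e.1 dm * φm e.1 (some e.2) dm) + Lp dm.2 * (tp e.1 dm * φp e.1 e.2 dm)))
        + ∑ i, C' i (G i) * (w i dm.2 * g i dm)
        = ∑ i, r i dm * ρ i dm := by rw [hDeq, hCeq]; exact hid
      _ = (∑ e ∈ E, (fm' e.1 e.2 dm * (ρ e.1 dm - ρ e.2 dm)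
            + fp' e.1 e.2 dm * (σ e.1 dm - σ e.2 dm)))
          + ∑ i, g' i dm * (ρ i dm - σ i dm) := hid'.symm
      _ ≤ _ := add_le_add hDle hCle
  -- Step 2: expand the linearized difference over tasks
  have hexp1 : ∑ e ∈ E, D' e.1 e.2 (F e.1 e.2) * (F' e.1 e.2 - F e.1 e.2)
      = ∑ dm ∈ Tsk, ∑ e ∈ E, D' e.1 e.2 (F e.1 e.2) *
        ((Lm dm.2 * fm' e.1 e.2 dm + Lp dm.2 * fp' e.1 e.2 dm)
          - (Lm dm.2 * (tm e.1 dm * φm e.1 (some e.2) dm)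
            + Lp dm.2 * (tp e.1 dm * φp e.1 e.2 dm))) := by
    rw [Finset.sum_comm]
    refine Finset.sum_congr rfl fun e _ => ?_
    set q := D' e.1 e.2 (F e.1 e.2) with hq
    rw [hF' e.1 e.2, hF e.1 e.2, ← Finset.sum_sub_distrib, Finset.mul_sum]
  have hexp2 : ∑ i, C' i (G i) * (G' i - G i)
      = ∑ dm ∈ Tsk, ∑ i, C' i (G i) * (w i dm.2 * g' i dm - w i dm.2 * g i dm) := by
    rw [Finset.sum_comm]
    refine Finset.sum_congr rfl fun i _ => ?_
    set q := C' i (G i) with hq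
    rw [hG' i, hG i, ← Finset.sum_sub_distrib, Finset.mul_sum]
  have hnn : 0 ≤ (∑ e ∈ E, D' e.1 e.2 (F e.1 e.2) * (F' e.1 e.2 - F e.1 e.2))
      + ∑ i, C' i (G i) * (G' i - G i) := by
    rw [hexp1, hexp2, ← Finset.sum_add_distrib]
    refine Finset.sum_nonneg fun dm hdm => ?_
    have hk := key dm hdm
    simp_rw [mul_sub, Finset.sum_sub_distrib]
    linarith
  -- Step 3: convexity (tangent line) bounds
  have hsD := Finset.sum_le_sum (fun e (he : e ∈ E) =>
    tangent_le (f := D e.1 e.2) (y := F' e.1 e.2) (hDconv e.1 e.2) (hDderiv e.1 e.2 (F e.1 e.2)))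
  have hsC := Finset.sum_le_sum (fun i (_ : i ∈ (univ : Finset V)) =>
    tangent_le (f := C i) (y := G' i) (hCconv i) (hCderiv i (G i)))
  rw [Finset.sum_add_distrib] at hsD hsC
  linarith
end

section
/- Fix input rates r and costs as in the model. (i) The set of flow-feasible vectors (f⁻, f⁺, g) is a convex set, and the flow-domain total cost T_f(f⁻, f⁺, g) = Σ_{(i,j)∈E} D_{ij}(F_{ij}) + Σ_{i∈V} C_i(G_i) — where F_{ij} = Σ_{(d,m)∈T}(L⁻_m f⁻_{ij}(d,m) + L⁺_m f⁺_{ij}(d,m)) and G_i = Σ_{m∈M} w_{im} Σ_{d:(d,m)∈T} g_i(d,m) are linear in (f⁻, f⁺, g) — is a convex function on this set. (ii) Consequently, if φ₁ and φ₂ are feasible forwarding strategies whose traffic vectors are all strictly positive, with induced flow vectors f₁ = f(φ₁) and f₂ = f(φ₂), then for every s ∈ [0,1] the interpolated flow (1−s)f₁ + s f₂ is flow-feasible with strictly positive traffic, there is a unique feasible strategy γ(s) inducing it, and the function s ↦ T(γ(s)) = T_f((1−s)f₁ + s f₂) is convex on [0,1]; that is, the total cost T(φ) is geodesically convex along the geodesic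 γ_{φ₁φ₂}(s) = φ((1−s)f(φ₁) + s f(φ₂)). -/
/-!
In the flow domain everything is convex: the feasibility constraints are linear equalities and
inequalities, and the total cost is a sum of convex functions of the loads `F_{ij}` and `G_i`,
which are linear in the flows. The flow induced by a feasible strategy with nonnegative traffic
is flow-feasible, and its traffic is the strategy's traffic. Along the segment between two such
flows the traffic interpolates linearly, so it stays positive, and the strategy is then recovered
uniquely as `φ = f / t`. Finally `s ↦ T(γ(s))` is the convex flow cost composed with the affine
map `s ↦ (1 - s) f₁ + s f₂`.
-/

open Finset

/-- Neighbors of node `i` in the link set `E`. -/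
def Nbr {V : Type*} [Fintype V] [DecidableEq V] (E : Finset (V × V)) (i : V) : Finset V :=
  univ.filter (fun j => (i, j) ∈ E)

/-- A flow-feasible vector `x = (f⁻, f⁺, g)`: nonnegative flows, supported on `E`, satisfying
the data and result flow-conservation constraints for every task. -/
def FlowFeasible {V M : Type*} [Fintype V] [DecidableEq V] [Fintype M] [DecidableEq M]
    (E : Finset (V × V)) (Tsk : Finset (V × M)) (r : V → V × M → ℝ)
    (x : (V → V → V × M → ℝ) × (V → V → V × M → ℝ) × (V → V × M → ℝ)) : Prop :=
  (∀ i j dm, 0 ≤ x.1 i j dm) ∧ (∀ i j dm, 0 ≤ x.2.1 i j dm) ∧ (∀ i dm, 0 ≤ x.2.2 i dm) ∧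
  (∀ i j dm, (i, j) ∉ E → x.1 i j dm = 0) ∧ (∀ i j dm, (i, j) ∉ E → x.2.1 i j dm = 0) ∧
  (∀ dm ∈ Tsk, ∀ i : V, (∑ j ∈ Nbr E i, x.1 i j dm) + x.2.2 i dm
      = (∑ j ∈ Nbr E i, x.1 j i dm) + r i dm) ∧
  (∀ dm ∈ Tsk, ∀ i : V, i ≠ dm.1 → (∑ j ∈ Nbr E i, x.2.1 i j dm)
      = (∑ j ∈ Nbr E i, x.2.1 j i dm) + x.2.2 i dm) ∧
  (∀ dm ∈ Tsk, ∀ j, x.2.1 dm.1 j dm = 0)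

/-- The flow-domain total cost `T_f(f⁻, f⁺, g)`. -/
noncomputable def flowCost {V M : Type*} [Fintype V] [DecidableEq V] [Fintype M] [DecidableEq M]
    (E : Finset (V × V)) (Tsk : Finset (V × M))
    (Lm Lp : M → ℝ) (w : V → M → ℝ) (D : V → V → ℝ → ℝ) (C : V → ℝ → ℝ)
    (x : (V → V → V × M → ℝ) × (V → V → V × M → ℝ) × (V → V × M → ℝ)) : ℝ :=
  (∑ e ∈ E, D e.1 e.2 (∑ dm ∈ Tsk, (Lm dm.2 * x.1 e.1 e.2 dm + Lp dm.2 * x.2.1 e.1 e.2 dm)))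
    + ∑ i, C i (∑ dm ∈ Tsk, w i dm.2 * x.2.2 i dm)

/-- A feasible forwarding strategy `(φ⁻, φ⁺)`. -/
def StratFeasible {V M : Type*} [Fintype V] [DecidableEq V] [Fintype M] [DecidableEq M]
    (E : Finset (V × V)) (Tsk : Finset (V × M))
    (φm : V → Option V → V × M → ℝ) (φp : V → V → V × M → ℝ) : Prop :=
  (∀ i j dm, 0 ≤ φm i j dm) ∧ (∀ i j dm, φm i j dm ≤ 1) ∧
  (∀ i j dm, 0 ≤ φp i j dm) ∧ (∀ i j dm, φp i j dm ≤ 1) ∧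
  (∀ i j dm, (i, j) ∉ E → φm i (some j) dm = 0) ∧
  (∀ i j dm, (i, j) ∉ E → φp i j dm = 0) ∧
  (∀ dm ∈ Tsk, ∀ i : V, φm i none dm + ∑ j, φm i (some j) dm = 1) ∧
  (∀ dm ∈ Tsk, ∀ i : V, i ≠ dm.1 → ∑ j, φp i j dm = 1) ∧
  (∀ dm ∈ Tsk, ∀ j, φp dm.1 j dm = 0)

/-- A strategy `(φ⁻, φ⁺)` induces the flow vector `x` when the forwarding fractions applied to
the traffic recovered from `x` (namely `t⁻_i = Σ_j f⁻_{ji} + r_i` and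
`t⁺_i = Σ_j f⁺_{ji} + g_i`) reproduce `x`. -/
def Induces {V M : Type*} [Fintype V] [DecidableEq V] [Fintype M] [DecidableEq M]
    (Tsk : Finset (V × M)) (r : V → V × M → ℝ)
    (φm : V → Option V → V × M → ℝ) (φp : V → V → V × M → ℝ)
    (x : (V → V → V × M → ℝ) × (V → V → V × M → ℝ) × (V → V × M → ℝ)) : Prop :=
  ∀ dm ∈ Tsk, ∀ i : V,
    (∀ j, x.1 i j dm = ((∑ k, x.1 k i dm) + r i dm) * φm i (some j) dm) ∧
    (x.2.2 i dm = ((∑ k, x.1 k i dm) + r i dm) * φm i none dm) ∧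
    (∀ j, x.2.1 i j dm = ((∑ k, x.2.1 k i dm) + x.2.2 i dm) * φp i j dm)

theorem ConvexOn.finset_sum {𝕜 E β ι : Type*} [Semiring 𝕜] [PartialOrder 𝕜] [AddCommMonoid E]
    [AddCommMonoid β] [PartialOrder β] [IsOrderedAddMonoid β] [SMul 𝕜 E] [Module 𝕜 β]
    {s : Set E} {f : ι → E → β} (t : Finset ι) (hs : Convex 𝕜 s)
    (hf : ∀ i ∈ t, ConvexOn 𝕜 s (f i)) : ConvexOn 𝕜 s (fun x => ∑ i ∈ t, f i x) := by
  classical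
  induction t using Finset.induction_on with
  | empty => simpa using convexOn_const (0 : β) hs
  | insert a t ha ih =>
    simp only [Finset.sum_insert ha]
    exact (hf a (mem_insert_self a t)).add (ih fun i hi => hf i (mem_insert_of_mem hi))

section FlowDomain

variable {V M : Type*}

abbrev FlowVec (V M : Type*) :=
  (V → V → V × M → ℝ) × (V → V → V × M → ℝ) × (V → V × M → ℝ)

def linkLoad (Tsk : Finset (V × M)) (Lm Lp : M → ℝ) (i j : V) : FlowVec V M →ₗ[ℝ] ℝ where
  toFun x := ∑ dm ∈ Tsk, (Lm dm.2 * x.1 i j dm + Lp dm.2 * x.2.1 i j dm)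
  map_add' x y := by
    simp only [Prod.fst_add, Prod.snd_add, Pi.add_apply, ← Finset.sum_add_distrib]
    exact Finset.sum_congr rfl fun _ _ => by ring
  map_smul' c x := by
    simp only [Prod.smul_fst, Prod.smul_snd, Pi.smul_apply, smul_eq_mul, RingHom.id_apply,
      Finset.mul_sum]
    exact Finset.sum_congr rfl fun _ _ => by ring

def computeLoad (Tsk : Finset (V × M)) (w : V → M → ℝ) (i : V) : FlowVec V M →ₗ[ℝ] ℝ where
  toFun x := ∑ dm ∈ Tsk, w i dm.2 * x.2.2 i dm
  map_add' x y := by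
    simp only [Prod.snd_add, Pi.add_apply, mul_add, Finset.sum_add_distrib]
  map_smul' c x := by
    simp only [Prod.smul_snd, Pi.smul_apply, smul_eq_mul, RingHom.id_apply, Finset.mul_sum]
    exact Finset.sum_congr rfl fun _ _ => by ring

/-- The outgoing data flows of node `i`, with `none` standing for its own computation unit
(the paper's `j = 0`). -/
def dataOut (x : FlowVec V M) (i : V) : Option V → V × M → ℝ
  | none, dm => x.2.2 i dm
  | some j, dm => x.1 i j dm

def inducedFlow (tm tp : V → V × M → ℝ) (φm : V → Option V → V × M → ℝ)
    (φp : V → V → V × M → ℝ) : FlowVec V M :=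
  (fun i j dm => tm i dm * φm i (some j) dm, fun i j dm => tp i dm * φp i j dm,
    fun i dm => tm i dm * φm i none dm)

variable [Fintype V]

def dataTraffic (r : V → V × M → ℝ) (x : FlowVec V M) (i : V) (dm : V × M) : ℝ :=
  (∑ k, x.1 k i dm) + r i dm

def resultTraffic (x : FlowVec V M) (i : V) (dm : V × M) : ℝ :=
  (∑ k, x.2.1 k i dm) + x.2.2 i dm

lemma dataTraffic_lineMap (r : V → V × M → ℝ) (x y : FlowVec V M) (s : ℝ) (i : V)
    (dm : V × M) :
    dataTraffic r (AffineMap.lineMap x y s) i dm =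
      AffineMap.lineMap (dataTraffic r x i dm) (dataTraffic r y i dm) s := by
  simp only [dataTraffic, AffineMap.lineMap_apply_module, Prod.fst_add, Prod.smul_fst,
    Pi.add_apply, Pi.smul_apply, smul_eq_mul, Finset.sum_add_distrib, ← Finset.mul_sum]
  ring

lemma resultTraffic_lineMap (x y : FlowVec V M) (s : ℝ) (i : V) (dm : V × M) :
    resultTraffic (AffineMap.lineMap x y s) i dm =
      AffineMap.lineMap (resultTraffic x i dm) (resultTraffic y i dm) s := by
  simp only [resultTraffic, AffineMap.lineMap_apply_module, Prod.fst_add, Prod.snd_add,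
    Prod.smul_fst, Prod.smul_snd, Pi.add_apply, Pi.smul_apply, smul_eq_mul,
    Finset.sum_add_distrib, ← Finset.mul_sum]
  ring

def HasPosTraffic (Tsk : Finset (V × M)) (r : V → V × M → ℝ) (x : FlowVec V M) : Prop :=
  ∀ dm ∈ Tsk, ∀ i, 0 < dataTraffic r x i dm ∧ 0 < resultTraffic x i dm

lemma HasPosTraffic.lineMap {Tsk : Finset (V × M)} {r : V → V × M → ℝ} {x y : FlowVec V M}
    (hx : HasPosTraffic Tsk r x) (hy : HasPosTraffic Tsk r y) {s : ℝ} (hs : s ∈ Set.Icc 0 1) :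
    HasPosTraffic Tsk r (AffineMap.lineMap x y s) := fun dm hdm i => by
  rw [dataTraffic_lineMap, resultTraffic_lineMap]
  exact ⟨(convex_Ioi (0 : ℝ)).lineMap_mem (hx dm hdm i).1 (hy dm hdm i).1 hs,
    (convex_Ioi (0 : ℝ)).lineMap_mem (hx dm hdm i).2 (hy dm hdm i).2 hs⟩

section

variable {Tsk : Finset (V × M)} {r : V → V × M → ℝ} {φm : V → Option V → V × M → ℝ}
  {φp : V → V → V × M → ℝ} {tm tp : V → V × M → ℝ}

lemma dataTraffic_inducedFlow
    (htm : ∀ dm ∈ Tsk, ∀ i : V, tm i dm = r i dm + ∑ j, tm j dm * φm j (some i) dm)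
    {dm : V × M} (hdm : dm ∈ Tsk) (i : V) :
    dataTraffic r (inducedFlow tm tp φm φp) i dm = tm i dm := by
  rw [htm dm hdm i, add_comm]
  rfl

lemma resultTraffic_inducedFlow
    (htp : ∀ dm ∈ Tsk, ∀ i : V, tp i dm = tm i dm * φm i none dm + ∑ j, tp j dm * φp j i dm)
    {dm : V × M} (hdm : dm ∈ Tsk) (i : V) :
    resultTraffic (inducedFlow tm tp φm φp) i dm = tp i dm := by
  rw [htp dm hdm i, add_comm]
  rfl

lemma hasPosTraffic_inducedFlow (htm0 : ∀ i dm, 0 < tm i dm) (htp0 : ∀ i dm, 0 < tp i dm)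
    (htm : ∀ dm ∈ Tsk, ∀ i : V, tm i dm = r i dm + ∑ j, tm j dm * φm j (some i) dm)
    (htp : ∀ dm ∈ Tsk, ∀ i : V, tp i dm = tm i dm * φm i none dm + ∑ j, tp j dm * φp j i dm) :
    HasPosTraffic Tsk r (inducedFlow tm tp φm φp) := fun dm hdm i => by
  rw [dataTraffic_inducedFlow htm hdm, resultTraffic_inducedFlow htp hdm]
  exact ⟨htm0 i dm, htp0 i dm⟩

end

variable [DecidableEq V]

lemma sum_nbr_eq_sum {β : Type*} [AddCommMonoid β] (E : Finset (V × V)) (i : V) (h : V → β)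
    (h0 : ∀ j, (i, j) ∉ E → h j = 0) : ∑ j ∈ Nbr E i, h j = ∑ j, h j :=
  Finset.sum_subset (Finset.filter_subset _ _) fun j _ hj => h0 j (by simpa [Nbr] using hj)

variable [Fintype M] [DecidableEq M]

lemma convex_flowFeasible (E : Finset (V × V)) (Tsk : Finset (V × M)) (r : V → V × M → ℝ) :
    Convex ℝ {x : FlowVec V M | FlowFeasible E Tsk r x} := by
  rintro x ⟨x1, x2, x3, x4, x5, x6, x7, x8⟩ y ⟨y1, y2, y3, y4, y5, y6, y7, y8⟩ a b ha hb hab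
  simp only [Set.mem_ofPred_eq, FlowFeasible, Prod.fst_add, Prod.snd_add, Prod.smul_fst,
    Prod.smul_snd, Pi.add_apply, Pi.smul_apply, smul_eq_mul]
  refine ⟨fun i j dm => ?_, fun i j dm => ?_, fun i dm => ?_, fun i j dm hij => ?_,
    fun i j dm hij => ?_, fun dm hdm i => ?_, fun dm hdm i hid => ?_, fun dm hdm j => ?_⟩
  · have := x1 i j dm; have := y1 i j dm; positivity
  · have := x2 i j dm; have := y2 i j dm; positivity
  · have := x3 i dm; have := y3 i dm; positivity
  · simp [x4 i j dm hij, y4 i j dm hij]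
  · simp [x5 i j dm hij, y5 i j dm hij]
  · simp only [Finset.sum_add_distrib, ← Finset.mul_sum]
    linear_combination a * x6 dm hdm i + b * y6 dm hdm i + r i dm * hab
  · simp only [Finset.sum_add_distrib, ← Finset.mul_sum]
    linear_combination a * x7 dm hdm i hid + b * y7 dm hdm i hid
  · simp [x8 dm hdm j, y8 dm hdm j]

lemma flowCost_eq (E : Finset (V × V)) (Tsk : Finset (V × M)) (Lm Lp : M → ℝ) (w : V → M → ℝ)
    (D : V → V → ℝ → ℝ) (C : V → ℝ → ℝ) (x : FlowVec V M) :
    flowCost E Tsk Lm Lp w D C x =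
      ∑ e ∈ E, D e.1 e.2 (linkLoad Tsk Lm Lp e.1 e.2 x) + ∑ i, C i (computeLoad Tsk w i x) :=
  rfl

lemma convexOn_flowCost (E : Finset (V × V)) (Tsk : Finset (V × M)) (Lm Lp : M → ℝ)
    (w : V → M → ℝ) {D : V → V → ℝ → ℝ} {C : V → ℝ → ℝ}
    (hD : ∀ i j, ConvexOn ℝ Set.univ (D i j)) (hC : ∀ i, ConvexOn ℝ Set.univ (C i)) :
    ConvexOn ℝ Set.univ (flowCost E Tsk Lm Lp w D C) := by
  simp only [funext (flowCost_eq E Tsk Lm Lp w D C)]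
  exact (ConvexOn.finset_sum E convex_univ fun e _ =>
      (hD e.1 e.2).comp_linearMap (linkLoad Tsk Lm Lp e.1 e.2)).add
    (ConvexOn.finset_sum univ convex_univ fun i _ => (hC i).comp_linearMap (computeLoad Tsk w i))

section

variable {E : Finset (V × V)} {Tsk : Finset (V × M)} {r : V → V × M → ℝ}
  {φm : V → Option V → V × M → ℝ} {φp : V → V → V × M → ℝ} {tm tp : V → V × M → ℝ}

lemma flowFeasible_inducedFlow (hE : ∀ i j : V, (i, j) ∈ E → (j, i) ∈ E)
    (hφ : StratFeasible E Tsk φm φp) (htm0 : ∀ i dm, 0 ≤ tm i dm) (htp0 : ∀ i dm, 0 ≤ tp i dm)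
    (htm : ∀ dm ∈ Tsk, ∀ i : V, tm i dm = r i dm + ∑ j, tm j dm * φm j (some i) dm)
    (htp : ∀ dm ∈ Tsk, ∀ i : V, tp i dm = tm i dm * φm i none dm + ∑ j, tp j dm * φp j i dm) :
    FlowFeasible E Tsk r (inducedFlow tm tp φm φp) := by
  obtain ⟨hm0, -, hp0, -, hmE, hpE, hm1, hp1, hpd⟩ := hφ
  have hmE' : ∀ i j dm, (i, j) ∉ E → tm i dm * φm i (some j) dm = 0 := fun i j dm hij => by
    rw [hmE i j dm hij, mul_zero]
  have hpE' : ∀ i j dm, (i, j) ∉ E → tp i dm * φp i j dm = 0 := fun i j dm hij => by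
    rw [hpE i j dm hij, mul_zero]
  refine ⟨fun i j dm => mul_nonneg (htm0 i dm) (hm0 i (some j) dm),
    fun i j dm => mul_nonneg (htp0 i dm) (hp0 i j dm),
    fun i dm => mul_nonneg (htm0 i dm) (hm0 i none dm), hmE', hpE', fun dm hdm i => ?_,
    fun dm hdm i hi => ?_, fun dm hdm j => by simp [inducedFlow, hpd dm hdm j]⟩
  · simp only [inducedFlow]
    rw [sum_nbr_eq_sum E i _ fun j hj => hmE' i j dm hj,
      sum_nbr_eq_sum E i _ fun j hj => hmE' j i dm (mt (hE j i) hj), ← Finset.mul_sum]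
    linear_combination tm i dm * hm1 dm hdm i + htm dm hdm i
  · simp only [inducedFlow]
    rw [sum_nbr_eq_sum E i _ fun j hj => hpE' i j dm hj,
      sum_nbr_eq_sum E i _ fun j hj => hpE' j i dm (mt (hE j i) hj), ← Finset.mul_sum]
    linear_combination tp i dm * hp1 dm hdm i hi + htp dm hdm i

end

namespace FlowFeasible

variable {E : Finset (V × V)} {Tsk : Finset (V × M)} {r : V → V × M → ℝ} {x : FlowVec V M}

lemma dataOut_nonneg (hx : FlowFeasible E Tsk r x) (i : V) (oj : Option V) (dm : V × M) :
    0 ≤ dataOut x i oj dm := by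
  obtain ⟨hf, -, hg, -⟩ := hx
  cases oj with
  | none => exact hg i dm
  | some j => exact hf i j dm

lemma dataOut_add_sum_eq (hE : ∀ i j : V, (i, j) ∈ E → (j, i) ∈ E)
    (hx : FlowFeasible E Tsk r x) {dm : V × M} (hdm : dm ∈ Tsk) (i : V) :
    dataOut x i none dm + ∑ j, dataOut x i (some j) dm = dataTraffic r x i dm := by
  obtain ⟨-, -, -, hfE, -, hcons, -⟩ := hx
  have hcons := hcons dm hdm i
  rw [sum_nbr_eq_sum E i _ fun j hj => hfE i j dm hj,
    sum_nbr_eq_sum E i _ fun j hj => hfE j i dm (mt (hE j i) hj)] at hcons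
  simp only [dataOut, dataTraffic]
  linarith

lemma sum_result_eq (hE : ∀ i j : V, (i, j) ∈ E → (j, i) ∈ E)
    (hx : FlowFeasible E Tsk r x) {dm : V × M} (hdm : dm ∈ Tsk) {i : V} (hi : i ≠ dm.1) :
    ∑ j, x.2.1 i j dm = resultTraffic x i dm := by
  obtain ⟨-, -, -, -, hfE, -, hcons, -⟩ := hx
  have hcons := hcons dm hdm i hi
  rwa [sum_nbr_eq_sum E i _ fun j hj => hfE i j dm hj,
    sum_nbr_eq_sum E i _ fun j hj => hfE j i dm (mt (hE j i) hj)] at hcons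

lemma dataOut_le_dataTraffic (hE : ∀ i j : V, (i, j) ∈ E → (j, i) ∈ E)
    (hx : FlowFeasible E Tsk r x) {dm : V × M} (hdm : dm ∈ Tsk) (i : V) (oj : Option V) :
    dataOut x i oj dm ≤ dataTraffic r x i dm := by
  rw [← hx.dataOut_add_sum_eq hE hdm i]
  have hsum := Finset.sum_nonneg fun j (_ : j ∈ univ) => hx.dataOut_nonneg i (some j) dm
  cases oj with
  | none => linarith
  | some j =>
    have := Finset.single_le_sum (fun j _ => hx.dataOut_nonneg i (some j) dm) (mem_univ j)
    linarith [hx.dataOut_nonneg i none dm]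

lemma result_le_resultTraffic (hE : ∀ i j : V, (i, j) ∈ E → (j, i) ∈ E)
    (hx : FlowFeasible E Tsk r x) {dm : V × M} (hdm : dm ∈ Tsk) (i j : V) :
    x.2.1 i j dm ≤ resultTraffic x i dm := by
  have ⟨_, hf, hg, _, _, _, _, hdest⟩ := hx
  by_cases hi : i = dm.1
  · subst hi
    rw [hdest dm hdm j]
    exact add_nonneg (Finset.sum_nonneg fun k _ => hf k _ dm) (hg _ dm)
  · rw [← hx.sum_result_eq hE hdm hi]
    exact Finset.single_le_sum (fun k _ => hf i k dm) (mem_univ j)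

end FlowFeasible

/-- The forwarding strategy read off a flow vector, `φ = f / t`. Outside the tasks it is set to
`0`, where no normalisation is required. -/
noncomputable def flowStrategy (Tsk : Finset (V × M)) (r : V → V × M → ℝ) (x : FlowVec V M) :
    (V → Option V → V × M → ℝ) × (V → V → V × M → ℝ) :=
  (fun i oj dm => if dm ∈ Tsk then dataOut x i oj dm / dataTraffic r x i dm else 0,
   fun i j dm => if dm ∈ Tsk then x.2.1 i j dm / resultTraffic x i dm else 0)

section FlowStrategy

variable {E : Finset (V × V)} {Tsk : Finset (V × M)} {r : V → V × M → ℝ} {x : FlowVec V M}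

lemma stratFeasible_flowStrategy (hE : ∀ i j : V, (i, j) ∈ E → (j, i) ∈ E)
    (hx : FlowFeasible E Tsk r x) (hpos : HasPosTraffic Tsk r x) :
    StratFeasible E Tsk (flowStrategy Tsk r x).1 (flowStrategy Tsk r x).2 := by
  have ⟨_, hres0, _, hdataE, hresE, _, _, hdest⟩ := hx
  refine ⟨fun i oj dm => ?_, fun i oj dm => ?_, fun i j dm => ?_, fun i j dm => ?_,
    fun i j dm hij => ?_, fun i j dm hij => ?_, fun dm hdm i => ?_, fun dm hdm i hi => ?_,
    fun dm hdm j => ?_⟩ <;> simp only [flowStrategy]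
  · split_ifs with hdm
    exacts [div_nonneg (hx.dataOut_nonneg i oj dm) (hpos dm hdm i).1.le, le_rfl]
  · split_ifs with hdm
    exacts [(div_le_one (hpos dm hdm i).1).2 (hx.dataOut_le_dataTraffic hE hdm i oj), zero_le_one]
  · split_ifs with hdm
    exacts [div_nonneg (hres0 i j dm) (hpos dm hdm i).2.le, le_rfl]
  · split_ifs with hdm
    exacts [(div_le_one (hpos dm hdm i).2).2 (hx.result_le_resultTraffic hE hdm i j),
      zero_le_one]
  · simp [dataOut, hdataE i j dm hij]
  · simp [hresE i j dm hij]
  · simp only [if_pos hdm, ← Finset.sum_div, ← add_div, hx.dataOut_add_sum_eq hE hdm i]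
    exact div_self (hpos dm hdm i).1.ne'
  · simp only [if_pos hdm, ← Finset.sum_div, hx.sum_result_eq hE hdm hi]
    exact div_self (hpos dm hdm i).2.ne'
  · simp [hdest dm hdm j]

lemma induces_flowStrategy
    (hpos : HasPosTraffic Tsk r x) :
    Induces Tsk r (flowStrategy Tsk r x).1 (flowStrategy Tsk r x).2 x := by
  intro dm hdm i
  have hm := (hpos dm hdm i).1.ne'
  have hp := (hpos dm hdm i).2.ne'
  refine ⟨fun j => ?_, ?_, fun j => ?_⟩ <;> simp only [flowStrategy, if_pos hdm]
  exacts [(mul_div_cancel₀ _ hm).symm, (mul_div_cancel₀ _ hm).symm, (mul_div_cancel₀ _ hp).symm]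

lemma Induces.eq_flowStrategy {φm : V → Option V → V × M → ℝ} {φp : V → V → V × M → ℝ}
    (h : Induces Tsk r φm φp x)
    (hpos : HasPosTraffic Tsk r x)
    (dm : V × M) (hdm : dm ∈ Tsk) :
    (∀ i oj, φm i oj dm = (flowStrategy Tsk r x).1 i oj dm) ∧
      ∀ i j, φp i j dm = (flowStrategy Tsk r x).2 i j dm := by
  refine ⟨fun i oj => ?_, fun i j => ?_⟩ <;> simp only [flowStrategy, if_pos hdm]
  · obtain ⟨hdata, hcpu, -⟩ := h dm hdm i
    rw [eq_div_iff (hpos dm hdm i).1.ne', mul_comm]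
    cases oj with
    | none => exact hcpu.symm
    | some j => exact (hdata j).symm
  · rw [eq_div_iff (hpos dm hdm i).2.ne', mul_comm]
    exact ((h dm hdm i).2.2 j).symm

end FlowStrategy

end FlowDomain

theorem stmt_8_general
    {V M : Type*} [Fintype V] [DecidableEq V] [Fintype M] [DecidableEq M]
    (E : Finset (V × V))
    (hEsymm : ∀ i j : V, (i, j) ∈ E → (j, i) ∈ E)
    (Tsk : Finset (V × M))
    (Lm Lp : M → ℝ)
    (w : V → M → ℝ)
    (r : V → V × M → ℝ)
    (D : V → V → ℝ → ℝ) (C : V → ℝ → ℝ)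
    (hDconv : ∀ i j, ConvexOn ℝ Set.univ (D i j))
    (hCconv : ∀ i, ConvexOn ℝ Set.univ (C i)) :
    -- (i) convexity in the flow domain
    (Convex ℝ {x : (V → V → V × M → ℝ) × (V → V → V × M → ℝ) × (V → V × M → ℝ) |
        FlowFeasible E Tsk r x} ∧
      ConvexOn ℝ {x : (V → V → V × M → ℝ) × (V → V → V × M → ℝ) × (V → V × M → ℝ) |
        FlowFeasible E Tsk r x} (flowCost E Tsk Lm Lp w D C)) ∧
    -- (ii) geodesic convexity of the total cost along flow-interpolation geodesics
    (∀ (φm₁ φp₁ : _) (φm₂ : V → Option V → V × M → ℝ) (φp₂ : V → V → V × M → ℝ)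
        (tm₁ tp₁ tm₂ tp₂ : V → V × M → ℝ),
      StratFeasible E Tsk φm₁ φp₁ → StratFeasible E Tsk φm₂ φp₂ →
      (∀ i dm, 0 < tm₁ i dm) → (∀ i dm, 0 < tp₁ i dm) →
      (∀ i dm, 0 < tm₂ i dm) → (∀ i dm, 0 < tp₂ i dm) →
      (∀ dm ∈ Tsk, ∀ i : V, tm₁ i dm = r i dm + ∑ j, tm₁ j dm * φm₁ j (some i) dm) →
      (∀ dm ∈ Tsk, ∀ i : V,
        tp₁ i dm = tm₁ i dm * φm₁ i none dm + ∑ j, tp₁ j dm * φp₁ j i dm) →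
      (∀ dm ∈ Tsk, ∀ i : V, tm₂ i dm = r i dm + ∑ j, tm₂ j dm * φm₂ j (some i) dm) →
      (∀ dm ∈ Tsk, ∀ i : V,
        tp₂ i dm = tm₂ i dm * φm₂ i none dm + ∑ j, tp₂ j dm * φp₂ j i dm) →
      ∀ xs : ℝ → (V → V → V × M → ℝ) × (V → V → V × M → ℝ) × (V → V × M → ℝ),
      (∀ s : ℝ, xs s =
        (fun i j dm => (1 - s) * (tm₁ i dm * φm₁ i (some j) dm)
            + s * (tm₂ i dm * φm₂ i (some j) dm),
         fun i j dm => (1 - s) * (tp₁ i dm * φp₁ i j dm) + s * (tp₂ i dm * φp₂ i j dm),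
         fun i dm => (1 - s) * (tm₁ i dm * φm₁ i none dm)
            + s * (tm₂ i dm * φm₂ i none dm))) →
      (∀ s ∈ Set.Icc (0 : ℝ) 1,
        -- the interpolated flow is flow-feasible
        FlowFeasible E Tsk r (xs s) ∧
        -- with strictly positive traffic
        (∀ dm ∈ Tsk, ∀ i : V, 0 < (∑ j, (xs s).1 j i dm) + r i dm ∧
          0 < (∑ j, (xs s).2.1 j i dm) + (xs s).2.2 i dm) ∧
        -- induced by a unique feasible strategy γ(s)
        (∃ φm φp, (StratFeasible E Tsk φm φp ∧ Induces Tsk r φm φp (xs s)) ∧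
          ∀ φm' φp', StratFeasible E Tsk φm' φp' → Induces Tsk r φm' φp' (xs s) →
            ∀ dm ∈ Tsk, (∀ i j, φm' i j dm = φm i j dm) ∧ ∀ i j, φp' i j dm = φp i j dm)) ∧
      -- and s ↦ T(γ(s)) is convex on [0,1]
      ConvexOn ℝ (Set.Icc (0 : ℝ) 1) (fun s => flowCost E Tsk Lm Lp w D C (xs s))) := by
  have hcost := convexOn_flowCost E Tsk Lm Lp w hDconv hCconv
  refine ⟨⟨convex_flowFeasible E Tsk r,
    hcost.subset (Set.subset_univ _) (convex_flowFeasible E Tsk r)⟩, ?_⟩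
  intro φm₁ φp₁ φm₂ φp₂ tm₁ tp₁ tm₂ tp₂ hφ₁ hφ₂ htm₁ htp₁ htm₂ htp₂ etm₁ etp₁ etm₂ etp₂ xs hxs
  obtain rfl : xs = AffineMap.lineMap (inducedFlow tm₁ tp₁ φm₁ φp₁) (inducedFlow tm₂ tp₂ φm₂ φp₂) :=
    funext fun s => by rw [hxs, AffineMap.lineMap_apply_module]; rfl
  refine ⟨fun s hs => ?_, (hcost.comp_affineMap _).subset (Set.subset_univ _) (convex_Icc 0 1)⟩
  have hfeas := (convex_flowFeasible E Tsk r).lineMap_mem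
    (flowFeasible_inducedFlow hEsymm hφ₁ (fun i dm => (htm₁ i dm).le) (fun i dm => (htp₁ i dm).le)
      etm₁ etp₁)
    (flowFeasible_inducedFlow hEsymm hφ₂ (fun i dm => (htm₂ i dm).le) (fun i dm => (htp₂ i dm).le)
      etm₂ etp₂) hs
  have hpos := (hasPosTraffic_inducedFlow htm₁ htp₁ etm₁ etp₁).lineMap
    (hasPosTraffic_inducedFlow htm₂ htp₂ etm₂ etp₂) hs
  exact ⟨hfeas, hpos, _, _, ⟨stratFeasible_flowStrategy hEsymm hfeas hpos,
    induces_flowStrategy hpos⟩, fun _ _ _ h => h.eq_flowStrategy hpos⟩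

/-- (i) The flow-feasible set is convex and the flow-domain total cost is convex on it.
(ii) For any two feasible strategies `φ₁, φ₂` with strictly positive traffic, every convex
combination of their induced flows is flow-feasible with strictly positive traffic, is induced
by a unique feasible strategy `γ(s)`, and `s ↦ T(γ(s)) = T_f((1−s)·f(φ₁) + s·f(φ₂))` is convex
on `[0,1]`: the total cost is geodesically convex along
`γ_{φ₁φ₂}(s) = φ((1−s)·f(φ₁) + s·f(φ₂))`. -/
theorem stmt_8
    {V M : Type*} [Fintype V] [DecidableEq V] [Fintype M] [DecidableEq M]
    (E : Finset (V × V))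
    (hEsymm : ∀ i j : V, (i, j) ∈ E → (j, i) ∈ E)
    (hEirrefl : ∀ i : V, (i, i) ∉ E)
    (Tsk : Finset (V × M))
    (Lm Lp : M → ℝ) (hLm : ∀ m, 0 < Lm m) (hLp : ∀ m, 0 < Lp m)
    (w : V → M → ℝ) (hw : ∀ i m, 0 < w i m)
    (r : V → V × M → ℝ) (hr : ∀ i dm, 0 ≤ r i dm)
    (D : V → V → ℝ → ℝ) (C : V → ℝ → ℝ)
    (hDmono : ∀ i j, Monotone (D i j))
    (hDconv : ∀ i j, ConvexOn ℝ Set.univ (D i j))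
    (hDdiff : ∀ i j, ContDiff ℝ 1 (D i j))
    (hCmono : ∀ i, Monotone (C i))
    (hCconv : ∀ i, ConvexOn ℝ Set.univ (C i))
    (hCdiff : ∀ i, ContDiff ℝ 1 (C i)) :
    -- (i) convexity in the flow domain
    (Convex ℝ {x : (V → V → V × M → ℝ) × (V → V → V × M → ℝ) × (V → V × M → ℝ) |
        FlowFeasible E Tsk r x} ∧
      ConvexOn ℝ {x : (V → V → V × M → ℝ) × (V → V → V × M → ℝ) × (V → V × M → ℝ) |
        FlowFeasible E Tsk r x} (flowCost E Tsk Lm Lp w D C)) ∧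
    -- (ii) geodesic convexity of the total cost along flow-interpolation geodesics
    (∀ (φm₁ φp₁ : _) (φm₂ : V → Option V → V × M → ℝ) (φp₂ : V → V → V × M → ℝ)
        (tm₁ tp₁ tm₂ tp₂ : V → V × M → ℝ),
      StratFeasible E Tsk φm₁ φp₁ → StratFeasible E Tsk φm₂ φp₂ →
      (∀ i dm, 0 < tm₁ i dm) → (∀ i dm, 0 < tp₁ i dm) →
      (∀ i dm, 0 < tm₂ i dm) → (∀ i dm, 0 < tp₂ i dm) →
      (∀ dm ∈ Tsk, ∀ i : V, tm₁ i dm = r i dm + ∑ j, tm₁ j dm * φm₁ j (some i) dm) →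
      (∀ dm ∈ Tsk, ∀ i : V,
        tp₁ i dm = tm₁ i dm * φm₁ i none dm + ∑ j, tp₁ j dm * φp₁ j i dm) →
      (∀ dm ∈ Tsk, ∀ i : V, tm₂ i dm = r i dm + ∑ j, tm₂ j dm * φm₂ j (some i) dm) →
      (∀ dm ∈ Tsk, ∀ i : V,
        tp₂ i dm = tm₂ i dm * φm₂ i none dm + ∑ j, tp₂ j dm * φp₂ j i dm) →
      ∀ xs : ℝ → (V → V → V × M → ℝ) × (V → V → V × M → ℝ) × (V → V × M → ℝ),
      (∀ s : ℝ, xs s =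
        (fun i j dm => (1 - s) * (tm₁ i dm * φm₁ i (some j) dm)
            + s * (tm₂ i dm * φm₂ i (some j) dm),
         fun i j dm => (1 - s) * (tp₁ i dm * φp₁ i j dm) + s * (tp₂ i dm * φp₂ i j dm),
         fun i dm => (1 - s) * (tm₁ i dm * φm₁ i none dm)
            + s * (tm₂ i dm * φm₂ i none dm))) →
      (∀ s ∈ Set.Icc (0 : ℝ) 1,
        -- the interpolated flow is flow-feasible
        FlowFeasible E Tsk r (xs s) ∧
        -- with strictly positive traffic
        (∀ dm ∈ Tsk, ∀ i : V, 0 < (∑ j, (xs s).1 j i dm) + r i dm ∧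
          0 < (∑ j, (xs s).2.1 j i dm) + (xs s).2.2 i dm) ∧
        -- induced by a unique feasible strategy γ(s)
        (∃ φm φp, (StratFeasible E Tsk φm φp ∧ Induces Tsk r φm φp (xs s)) ∧
          ∀ φm' φp', StratFeasible E Tsk φm' φp' → Induces Tsk r φm' φp' (xs s) →
            ∀ dm ∈ Tsk, (∀ i j, φm' i j dm = φm i j dm) ∧ ∀ i j, φp' i j dm = φp i j dm)) ∧
      -- and s ↦ T(γ(s)) is convex on [0,1]
      ConvexOn ℝ (Set.Icc (0 : ℝ) 1) (fun s => flowCost E Tsk Lm Lp w D C (xs s))) :=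
  stmt_8_general E hEsymm Tsk Lm Lp w r D C hDconv hCconv
end

section
/- There exist a network instance satisfying the model assumptions (finite node set V, symmetric edge set E, tasks T, packet sizes, weights, and nondecreasing convex continuously differentiable link and computation costs) and an input-rate vector r ∈ D_r such that the optimal-solution map F_opt is not lower hemicontinuous at r: there exist a strategy φ ∈ F_opt(r) and a sequence rⁿ ∈ D_r with rⁿ → r such that no sequence φⁿ with φⁿ ∈ F_opt(rⁿ) for all n converges to φ. -/
open Finset

/-- `(t⁻, t⁺)` is a nonnegative solution of the traffic equations for strategy `(φ⁻, φ⁺)` at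
input rates `r`. -/
def TrafficSol {V M : Type*} [Fintype V] [DecidableEq V] [Fintype M] [DecidableEq M]
    (Tsk : Finset (V × M)) (r : V → V × M → ℝ)
    (φm : V → Option V → V × M → ℝ) (φp : V → V → V × M → ℝ)
    (tm tp : V → V × M → ℝ) : Prop :=
  (∀ i dm, 0 ≤ tm i dm) ∧ (∀ i dm, 0 ≤ tp i dm) ∧
  (∀ dm ∈ Tsk, ∀ i : V, tm i dm = r i dm + ∑ j, tm j dm * φm j (some i) dm) ∧
  (∀ dm ∈ Tsk, ∀ i : V,
    tp i dm = tm i dm * φm i none dm + ∑ j, tp j dm * φp j i dm)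

/-- `(t⁻, t⁺)` is the coordinatewise minimal nonnegative traffic solution. -/
def MinTraffic {V M : Type*} [Fintype V] [DecidableEq V] [Fintype M] [DecidableEq M]
    (Tsk : Finset (V × M)) (r : V → V × M → ℝ)
    (φm : V → Option V → V × M → ℝ) (φp : V → V → V × M → ℝ)
    (tm tp : V → V × M → ℝ) : Prop :=
  TrafficSol Tsk r φm φp tm tp ∧
    ∀ tm' tp', TrafficSol Tsk r φm φp tm' tp' →
      ∀ i dm, tm i dm ≤ tm' i dm ∧ tp i dm ≤ tp' i dm

/-- The set `D_φ(r)` of feasible strategies admitting a traffic solution at input rates `r`. -/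
def Dphi {V M : Type*} [Fintype V] [DecidableEq V] [Fintype M] [DecidableEq M]
    (E : Finset (V × V)) (Tsk : Finset (V × M)) (r : V → V × M → ℝ) :
    Set ((V → Option V → V × M → ℝ) × (V → V → V × M → ℝ)) :=
  {φ | StratFeasible E Tsk φ.1 φ.2 ∧ ∃ tm tp, TrafficSol Tsk r φ.1 φ.2 tm tp}

/-- The stability region `D_r` of input rates. -/
def Dr {V M : Type*} [Fintype V] [DecidableEq V] [Fintype M] [DecidableEq M]
    (E : Finset (V × V)) (Tsk : Finset (V × M)) : Set (V → V × M → ℝ) :=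
  {r | (∀ i dm, 0 ≤ r i dm) ∧ (Dphi E Tsk r).Nonempty}

/-- Total cost of a strategy with traffic `(t⁻, t⁺)`. -/
noncomputable def stratCost {V M : Type*} [Fintype V] [DecidableEq V] [Fintype M] [DecidableEq M]
    (E : Finset (V × V)) (Tsk : Finset (V × M))
    (Lm Lp : M → ℝ) (w : V → M → ℝ) (D : V → V → ℝ → ℝ) (C : V → ℝ → ℝ)
    (φm : V → Option V → V × M → ℝ) (φp : V → V → V × M → ℝ)
    (tm tp : V → V × M → ℝ) : ℝ :=
  (∑ e ∈ E, D e.1 e.2 (∑ dm ∈ Tsk,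
      (Lm dm.2 * (tm e.1 dm * φm e.1 (some e.2) dm) + Lp dm.2 * (tp e.1 dm * φp e.1 e.2 dm))))
    + ∑ i, C i (∑ dm ∈ Tsk, w i dm.2 * (tm i dm * φm i none dm))

/-- The optimal-solution set `F_opt(r)`: feasible strategies whose cost, evaluated at the
coordinatewise minimal traffic solution, is no larger than that of any other feasible strategy
evaluated at its minimal traffic solution. -/
def Fopt {V M : Type*} [Fintype V] [DecidableEq V] [Fintype M] [DecidableEq M]
    (E : Finset (V × V)) (Tsk : Finset (V × M))
    (Lm Lp : M → ℝ) (w : V → M → ℝ) (D : V → V → ℝ → ℝ) (C : V → ℝ → ℝ)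
    (r : V → V × M → ℝ) :
    Set ((V → Option V → V × M → ℝ) × (V → V → V × M → ℝ)) :=
  {φ | φ ∈ Dphi E Tsk r ∧
    ∃ tm tp, MinTraffic Tsk r φ.1 φ.2 tm tp ∧
      ∀ φ' ∈ Dphi E Tsk r, ∀ tm' tp', MinTraffic Tsk r φ'.1 φ'.2 tm' tp' →
        stratCost E Tsk Lm Lp w D C φ.1 φ.2 tm tp
          ≤ stratCost E Tsk Lm Lp w D C φ'.1 φ'.2 tm' tp'}

open Filter Topology

/-!
Three nodes, one task with destination `0`, every cost zero except the identity cost on the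
link `(1, 0)`. At zero input every strategy costs nothing, so the strategy in which node `1`
ships its data over `(1, 0)` is optimal. As soon as node `1` has input `a > 0`, computing
locally and sending the results along `1 → 2 → 0` is still free, while any data on `(1, 0)`
costs at least `a` times the fraction sent; so every optimum sends no data over `(1, 0)`, and
optima along `rⁿ → 0` stay at distance `1` from the chosen optimum at `0`.
-/

section TrafficEquations

variable {V M : Type*} [Fintype V] [DecidableEq V] [Fintype M] [DecidableEq M]
  {Tsk : Finset (V × M)} {φm : V → Option V → V × M → ℝ} {φp : V → V → V × M → ℝ}

theorem minTraffic_zero_rate : MinTraffic Tsk 0 φm φp 0 0 :=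
  ⟨⟨fun _ _ => le_rfl, fun _ _ => le_rfl, by simp, by simp⟩,
    fun _ _ htr i dm => ⟨htr.1 i dm, htr.2.1 i dm⟩⟩

theorem TrafficSol.rate_le_dataTraffic {r : V → V × M → ℝ} {tm tp : V → V × M → ℝ}
    (htr : TrafficSol Tsk r φm φp tm tp) (hφm : ∀ i j dm, 0 ≤ φm i j dm)
    {dm : V × M} (hdm : dm ∈ Tsk) (i : V) : r i dm ≤ tm i dm := by
  rw [htr.2.2.1 dm hdm i]
  exact le_add_of_nonneg_right <| sum_nonneg fun j _ => mul_nonneg (htr.1 j dm) (hφm j _ dm)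

end TrafficEquations

theorem not_exists_tendsto_of_map_eq {X Y : Type*} [TopologicalSpace X] [TopologicalSpace Y]
    [T2Space Y] {f : X → Y} (hf : Continuous f) {S : ℕ → Set X} {y : Y}
    (hS : ∀ k, ∀ p ∈ S k, f p = y) {x : X} (hx : f x ≠ y) :
    ¬ ∃ xs : ℕ → X, (∀ k, xs k ∈ S k) ∧ Tendsto xs atTop (𝓝 x) := by
  rintro ⟨xs, hxs, hlim⟩
  refine hx (tendsto_nhds_unique ((hf.tendsto x).comp hlim) ?_)
  simpa only [Function.comp_def, hS _ _ (hxs _)] using tendsto_const_nhds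

namespace ThreeNodeExample

def task : Fin 3 × Fin 1 := (0, 0)

def links : Finset (Fin 3 × Fin 3) := univ.filter fun e => e.1 ≠ e.2

def tasks : Finset (Fin 3 × Fin 1) := {task}

noncomputable def linkCost (i j : Fin 3) : ℝ → ℝ := if i = 1 ∧ j = 0 then id else 0

noncomputable abbrev optima (r : Fin 3 → Fin 3 × Fin 1 → ℝ) :
    Set ((Fin 3 → Option (Fin 3) → Fin 3 × Fin 1 → ℝ) × (Fin 3 → Fin 3 → Fin 3 × Fin 1 → ℝ)) :=
  Fopt links tasks 1 1 1 linkCost 0 r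

theorem mem_links {i j : Fin 3} : (i, j) ∈ links ↔ i ≠ j := by
  simp [links]

theorem monotone_linkCost (i j : Fin 3) : Monotone (linkCost i j) := by
  unfold linkCost; split_ifs
  exacts [monotone_id, monotone_const]

theorem convexOn_linkCost (i j : Fin 3) : ConvexOn ℝ Set.univ (linkCost i j) := by
  unfold linkCost; split_ifs
  exacts [convexOn_id convex_univ, convexOn_const 0 convex_univ]

theorem contDiff_linkCost (i j : Fin 3) : ContDiff ℝ 1 (linkCost i j) := by
  unfold linkCost; split_ifs
  exacts [contDiff_id, contDiff_const]

theorem stratCost_eq (φm φp tm tp) :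
    stratCost links tasks 1 1 1 linkCost 0 φm φp tm tp =
      tm 1 task * φm 1 (some 0) task + tp 1 task * φp 1 0 task := by
  rw [stratCost, sum_eq_single_of_mem (1, 0) (mem_links.2 (by decide))]
  · simp [linkCost, tasks]
  · rintro ⟨i, j⟩ - hij
    simp [linkCost, show ¬(i = 1 ∧ j = 0) by rintro ⟨rfl, rfl⟩; exact hij rfl]

noncomputable def shipData : (Fin 3 → Option (Fin 3) → Fin 3 × Fin 1 → ℝ) ×
    (Fin 3 → Fin 3 → Fin 3 × Fin 1 → ℝ) :=
  (fun i j _ => if i = 1 then (if j = some 0 then 1 else 0) else (if j = none then 1 else 0),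
   fun i j _ => if i ≠ 0 ∧ j = 0 then 1 else 0)

noncomputable def computeLocally : (Fin 3 → Option (Fin 3) → Fin 3 × Fin 1 → ℝ) ×
    (Fin 3 → Fin 3 → Fin 3 × Fin 1 → ℝ) :=
  (fun _ j _ => if j = none then 1 else 0,
   fun i j _ => if (i = 1 ∧ j = 2) ∨ (i = 2 ∧ j = 0) then 1 else 0)

theorem stratFeasible_shipData : StratFeasible links tasks shipData.1 shipData.2 := by
  refine ⟨?_, ?_, ?_, ?_, ?_, ?_, ?_, ?_, ?_⟩ <;>
    simp [shipData, mem_links, tasks, task, Fin.forall_fin_succ, Option.forall, filter_eq']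

theorem stratFeasible_computeLocally :
    StratFeasible links tasks computeLocally.1 computeLocally.2 := by
  refine ⟨?_, ?_, ?_, ?_, ?_, ?_, ?_, ?_, ?_⟩ <;>
    simp [computeLocally, mem_links, tasks, task, Fin.forall_fin_succ, Option.forall, filter_eq']

theorem stratCost_computeLocally (tm tp) :
    stratCost links tasks 1 1 1 linkCost 0 computeLocally.1 computeLocally.2 tm tp = 0 := by
  simp [stratCost_eq, computeLocally]

def rateAt1 (a : ℝ) : Fin 3 → Fin 3 × Fin 1 → ℝ := fun i _ => if i = 1 then a else 0

theorem rateAt1_zero : rateAt1 0 = 0 := by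
  ext i; simp [rateAt1]

theorem continuous_rateAt1 : Continuous rateAt1 := by
  refine continuous_pi fun i => continuous_pi fun _ => ?_
  unfold rateAt1; split_ifs
  exacts [continuous_id, continuous_const]

theorem minTraffic_computeLocally {a : ℝ} (ha : 0 ≤ a) :
    MinTraffic tasks (rateAt1 a) computeLocally.1 computeLocally.2
      (fun i dm => if i = 1 ∧ dm = task then a else 0) (fun _ dm => if dm = task then a else 0) := by
  refine ⟨⟨fun _ _ => ite_nonneg ha le_rfl, fun _ _ => ite_nonneg ha le_rfl, ?_, ?_⟩, ?_⟩
  · simp [tasks, rateAt1, computeLocally]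
  · simp [tasks, computeLocally, Fin.forall_fin_succ, Fin.sum_univ_three]
  · rintro tm tp ⟨htm, htp, hdata, hresult⟩ i dm
    by_cases hdm : dm = task
    · subst hdm
      have hdata := hdata task (mem_singleton_self _)
      have hresult := hresult task (mem_singleton_self _)
      have htm1 : tm 1 task = a := by simpa [computeLocally, rateAt1] using hdata 1
      have htp1 : tp 1 task = a := by
        simpa [computeLocally, Fin.sum_univ_three, htm1] using hresult 1
      have htp2 : tp 2 task = tm 2 task + a := by
        simpa [computeLocally, Fin.sum_univ_three, htp1] using hresult 2
      have htp0 : tp 0 task = tm 0 task + tp 2 task := by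
        simpa [computeLocally, Fin.sum_univ_three] using hresult 0
      fin_cases i <;>
        simp only [Fin.zero_eta, Fin.mk_one, Fin.reduceFinMk, Fin.isValue, Fin.reduceEq, zero_ne_one,
          and_true, and_self, ↓reduceIte] <;>
        constructor <;> linarith [htm 0 task, htm 2 task]
    · simp [hdm, htm, htp]

theorem rateAt1_mem_Dr {a : ℝ} (ha : 0 ≤ a) : rateAt1 a ∈ Dr links tasks :=
  ⟨fun _ _ => ite_nonneg ha le_rfl, computeLocally, stratFeasible_computeLocally, _, _,
    (minTraffic_computeLocally ha).1⟩

theorem shipData_mem_optima_zero : shipData ∈ optima 0 := by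
  refine ⟨⟨stratFeasible_shipData, 0, 0, minTraffic_zero_rate.1⟩, 0, 0, minTraffic_zero_rate,
    fun φ' ⟨hφ', _⟩ tm' tp' hmin' => ?_⟩
  rw [stratCost_eq, stratCost_eq]
  simp only [Pi.zero_apply, zero_mul, add_zero]
  exact add_nonneg (mul_nonneg (hmin'.1.1 1 task) (hφ'.1 1 (some 0) task))
    (mul_nonneg (hmin'.1.2.1 1 task) (hφ'.2.2.1 1 0 task))

theorem dataToZero_eq_zero_of_mem_optima {a : ℝ} (ha : 0 < a) {ψ} (hψ : ψ ∈ optima (rateAt1 a)) :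
    ψ.1 1 (some 0) task = 0 := by
  obtain ⟨⟨hfeas, -⟩, tm, tp, ⟨htr, -⟩, hopt⟩ := hψ
  have hle := hopt computeLocally ⟨stratFeasible_computeLocally, _, _,
    (minTraffic_computeLocally ha.le).1⟩ _ _ (minTraffic_computeLocally ha.le)
  rw [stratCost_eq, stratCost_computeLocally] at hle
  have hrate : a ≤ tm 1 task := by
    simpa [rateAt1] using htr.rate_le_dataTraffic hfeas.1 (mem_singleton_self task) 1
  have h1 := mul_nonneg (htr.1 1 task) (hfeas.1 1 (some 0) task)
  have h2 := mul_nonneg (htr.2.1 1 task) (hfeas.2.2.1 1 0 task)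
  have h3 : tm 1 task * ψ.1 1 (some 0) task = 0 := le_antisymm (by linarith) h1
  exact (mul_eq_zero.1 h3).resolve_left (by linarith)

end ThreeNodeExample

open ThreeNodeExample in
/-- Proposition 2: there is a network instance satisfying the model assumptions and an input
rate `r` in the stability region at which the optimal-solution map `F_opt` is not lower
hemicontinuous: some optimum `φ` at `r` is not the limit of any sequence of optima along some
sequence `rⁿ → r` in `D_r`. -/
theorem stmt_9 :
    ∃ (n nm : ℕ) (E : Finset (Fin n × Fin n)) (Tsk : Finset (Fin n × Fin nm))
      (Lm Lp : Fin nm → ℝ) (w : Fin n → Fin nm → ℝ)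
      (D : Fin n → Fin n → ℝ → ℝ) (C : Fin n → ℝ → ℝ),
      (∀ i j : Fin n, (i, j) ∈ E → (j, i) ∈ E) ∧ (∀ i : Fin n, (i, i) ∉ E) ∧
      (∀ m, 0 < Lm m) ∧ (∀ m, 0 < Lp m) ∧ (∀ i m, 0 < w i m) ∧
      (∀ i j, Monotone (D i j)) ∧ (∀ i j, ConvexOn ℝ Set.univ (D i j)) ∧
      (∀ i j, ContDiff ℝ 1 (D i j)) ∧
      (∀ i, Monotone (C i)) ∧ (∀ i, ConvexOn ℝ Set.univ (C i)) ∧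
      (∀ i, ContDiff ℝ 1 (C i)) ∧
      ∃ r ∈ Dr E Tsk, ∃ φ ∈ Fopt E Tsk Lm Lp w D C r,
        ∃ rseq : ℕ → (Fin n → Fin n × Fin nm → ℝ),
          (∀ k, rseq k ∈ Dr E Tsk) ∧
          Filter.Tendsto rseq Filter.atTop (nhds r) ∧
          ¬ ∃ φseq : ℕ → (Fin n → Option (Fin n) → Fin n × Fin nm → ℝ) ×
                (Fin n → Fin n → Fin n × Fin nm → ℝ),
              (∀ k, φseq k ∈ Fopt E Tsk Lm Lp w D C (rseq k)) ∧
              Filter.Tendsto φseq Filter.atTop (nhds φ) := by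
  refine ⟨3, 1, links, tasks, 1, 1, 1, linkCost, 0,
    fun _ _ h => mem_links.2 (mem_links.1 h).symm, fun _ h => mem_links.1 h rfl,
    fun _ => one_pos, fun _ => one_pos, fun _ _ => one_pos,
    monotone_linkCost, convexOn_linkCost, contDiff_linkCost,
    fun _ => monotone_const, fun _ => convexOn_const 0 convex_univ, fun _ => contDiff_const,
    rateAt1 0, rateAt1_mem_Dr le_rfl, shipData, rateAt1_zero ▸ shipData_mem_optima_zero,
    fun k => rateAt1 (1 / (k + 1)), fun k => rateAt1_mem_Dr (by positivity),
    (continuous_rateAt1.tendsto 0).comp tendsto_one_div_add_atTop_nhds_zero_nat, ?_⟩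
  refine not_exists_tendsto_of_map_eq (f := fun ψ => ψ.1 1 (some 0) task) (by fun_prop)
    (fun k ψ hψ => dataToZero_eq_zero_of_mem_optima (by positivity) hψ) ?_
  simp [shipData]
end
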